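/- arXiv:1712.01787 — 10 statements merged into one kernel-verified Lean document; each statement's English description precedes it below -/
import Mathlib

section
/- Let f : ℝⁿ → ℝᵠ be continuous with an isolated zero at p (only zero in B(p,R)). If the restriction of f to some sphere S(p,r), r ∈ (0,R), is null-homotopic as a map into ℝᵠ \ {0}, then for every ε > 0 there exists δ ∈ (0,R] such that for all r ∈ (0,δ), the restriction of f to S(p,r) is null-homotopic as a map into the punctured ball B*(0,ε) = {y ∈ ℝᵠ : 0 < ‖y‖ < ε}. -/
/-!
Radially rescaling `S(p, r)` onto `S(p, r₀)` through the spheres in between, which lie in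
`B(p, R) \ {p}` where `f` does not vanish, shows that `f` on `S(p, r)` is null-homotopic in
`ℝᵠ \ {0}` for every `r ∈ (0, R)`. For small `r`, continuity at `p` puts `f(S(p, r))` in the
closed ball of radius `ε / 2`; composing the null-homotopy with the radial retraction of
`ℝᵠ \ {0}` onto the punctured closed ball of radius `ε / 2`, which fixes `f` on `S(p, r)`,
keeps the homotopy inside `B*(0, ε)`.
-/

open Metric Set

/-- `f` restricted to `A` is null-homotopic as a map into `X` ⊆ ℝ^q:
there is a continuous homotopy within `X` from `f|_A` to a constant map. -/
def IsNullHomotopicOn {n q : ℕ}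
    (f : EuclideanSpace ℝ (Fin n) → EuclideanSpace ℝ (Fin q))
    (A : Set (EuclideanSpace ℝ (Fin n)))
    (X : Set (EuclideanSpace ℝ (Fin q))) : Prop :=
  ∃ (F : EuclideanSpace ℝ (Fin n) × ℝ → EuclideanSpace ℝ (Fin q))
    (c : EuclideanSpace ℝ (Fin q)),
      c ∈ X ∧
      ContinuousOn F (A ×ˢ Icc (0:ℝ) 1) ∧
      (∀ x ∈ A, F (x, 0) = f x) ∧
      (∀ x ∈ A, F (x, 1) = c) ∧
      (∀ x ∈ A, ∀ t ∈ Icc (0:ℝ) 1, F (x, t) ∈ X)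

namespace IsNullHomotopicOn

variable {n q : ℕ} {f g : EuclideanSpace ℝ (Fin n) → EuclideanSpace ℝ (Fin q)}
  {A B : Set (EuclideanSpace ℝ (Fin n))} {X Y : Set (EuclideanSpace ℝ (Fin q))}

theorem congr (h : IsNullHomotopicOn f A X) (hgf : EqOn g f A) : IsNullHomotopicOn g A X := by
  obtain ⟨F, c, hc, hF, hF0, hF1, hFX⟩ := h
  exact ⟨F, c, hc, hF, fun x hx => (hF0 x hx).trans (hgf hx).symm, hF1, hFX⟩

theorem comp_left (h : IsNullHomotopicOn f A X)
    {φ : EuclideanSpace ℝ (Fin q) → EuclideanSpace ℝ (Fin q)} (hφ : ContinuousOn φ X)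
    (hφXY : MapsTo φ X Y) : IsNullHomotopicOn (φ ∘ f) A Y := by
  obtain ⟨F, c, hc, hF, hF0, hF1, hFX⟩ := h
  refine ⟨φ ∘ F, φ c, hφXY hc, hφ.comp hF fun z hz => hFX z.1 hz.1 z.2 hz.2,
    fun x hx => ?_, fun x hx => ?_, fun x hx t ht => hφXY (hFX x hx t ht)⟩
  · simp only [Function.comp_apply, hF0 x hx]
  · simp only [Function.comp_apply, hF1 x hx]

theorem comp_right (h : IsNullHomotopicOn f B X)
    {σ : EuclideanSpace ℝ (Fin n) → EuclideanSpace ℝ (Fin n)} (hσ : ContinuousOn σ A)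
    (hσAB : MapsTo σ A B) : IsNullHomotopicOn (f ∘ σ) A X := by
  obtain ⟨F, c, hc, hF, hF0, hF1, hFX⟩ := h
  refine ⟨fun z => F (σ z.1, z.2), c, hc, ?_, fun x hx => hF0 _ (hσAB hx),
    fun x hx => hF1 _ (hσAB hx), fun x hx t ht => hFX _ (hσAB hx) t ht⟩
  exact hF.comp ((hσ.comp continuousOn_fst fun z hz => hz.1).prodMk continuousOn_snd)
    fun z hz => ⟨hσAB hz.1, hz.2⟩

theorem of_homotopy (G : EuclideanSpace ℝ (Fin n) × ℝ → EuclideanSpace ℝ (Fin q))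
    (hG : ContinuousOn G (A ×ˢ Icc 0 1)) (hG0 : ∀ x ∈ A, G (x, 0) = f x)
    (hG1 : ∀ x ∈ A, G (x, 1) = g x) (hGX : ∀ x ∈ A, ∀ t ∈ Icc (0:ℝ) 1, G (x, t) ∈ X)
    (hg : IsNullHomotopicOn g A X) : IsNullHomotopicOn f A X := by
  obtain ⟨F, c, hc, hF, hF0, hF1, hFX⟩ := hg
  -- Adding and subtracting `F (x, 0) = g x` glues the two homotopies without a case split.
  set H : EuclideanSpace ℝ (Fin n) × ℝ → EuclideanSpace ℝ (Fin q) :=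
    fun z => G (z.1, min 1 (2 * z.2)) + F (z.1, max 0 (2 * z.2 - 1)) - F (z.1, 0)
  have hH_first : ∀ x, ∀ t ≤ 1 / 2, H (x, t) = G (x, 2 * t) := fun x t ht => by
    simp only [H, min_eq_right (by linarith : 2 * t ≤ 1), max_eq_left (by linarith : 2 * t - 1 ≤ 0),
      add_sub_cancel_right]
  have hH_second : ∀ x ∈ A, ∀ t, 1 / 2 ≤ t → H (x, t) = F (x, 2 * t - 1) := fun x hx t ht => by
    simp only [H, min_eq_left (by linarith : 1 ≤ 2 * t), max_eq_right (by linarith : 0 ≤ 2 * t - 1),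
      hG1 x hx, hF0 x hx, add_sub_cancel_left]
  refine ⟨H, c, hc, ?_, fun x hx => ?_, fun x hx => ?_, fun x hx t ht => ?_⟩
  · have hmin : MapsTo (fun z : _ × ℝ => (z.1, min 1 (2 * z.2))) (A ×ˢ Icc 0 1) (A ×ˢ Icc 0 1) :=
      fun z hz => ⟨hz.1, le_min zero_le_one (by linarith [hz.2.1]), min_le_left _ _⟩
    have hmax :
        MapsTo (fun z : _ × ℝ => (z.1, max 0 (2 * z.2 - 1))) (A ×ˢ Icc 0 1) (A ×ˢ Icc 0 1) :=
      fun z hz => ⟨hz.1, le_max_left _ _, max_le zero_le_one (by linarith [hz.2.2])⟩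
    have hzero : MapsTo (fun z : _ × ℝ => (z.1, (0:ℝ))) (A ×ˢ Icc 0 1) (A ×ˢ Icc 0 1) :=
      fun z hz => ⟨hz.1, left_mem_Icc.2 zero_le_one⟩
    exact ((hG.comp (by fun_prop) hmin).add (hF.comp (by fun_prop) hmax)).sub
      (hF.comp (by fun_prop) hzero)
  · rw [hH_first x 0 (by norm_num), mul_zero, hG0 x hx]
  · rw [hH_second x hx 1 (by norm_num), show (2:ℝ) * 1 - 1 = 1 by norm_num, hF1 x hx]
  · rcases le_total t (1 / 2) with ht' | ht'
    · rw [hH_first x t ht']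
      exact hGX x hx _ ⟨by linarith [ht.1], by linarith⟩
    · rw [hH_second x hx t ht']
      exact hFX x hx _ ⟨by linarith, by linarith [ht.2]⟩

end IsNullHomotopicOn

section

variable {E : Type*} [NormedAddCommGroup E] [NormedSpace ℝ E]

noncomputable def radialClamp (ρ : ℝ) (y : E) : E := min 1 (ρ / ‖y‖) • y

theorem norm_radialClamp {ρ : ℝ} (hρ : 0 ≤ ρ) (y : E) : ‖radialClamp ρ y‖ = min ‖y‖ ρ := by
  rcases eq_or_ne y 0 with rfl | hy
  · simp [radialClamp, hρ]
  have hy' : 0 < ‖y‖ := norm_pos_iff.2 hy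
  rw [radialClamp, norm_smul, Real.norm_of_nonneg (le_min zero_le_one (by positivity)),
    min_mul_of_nonneg _ _ hy'.le, one_mul, div_mul_cancel₀ _ hy'.ne']

theorem radialClamp_of_norm_le {ρ : ℝ} {y : E} (hy : ‖y‖ ≤ ρ) : radialClamp ρ y = y := by
  rcases eq_or_ne y 0 with rfl | hy0
  · simp [radialClamp]
  rw [radialClamp, min_eq_left ((one_le_div (norm_pos_iff.2 hy0)).2 hy), one_smul]

theorem continuousOn_radialClamp (ρ : ℝ) : ContinuousOn (radialClamp (E := E) ρ) {y | y ≠ 0} :=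
  (continuousOn_const.inf (continuousOn_const.div continuous_norm.continuousOn
    fun _ hy => norm_ne_zero_iff.2 hy)).smul continuousOn_id

theorem mapsTo_radialClamp {ρ ε : ℝ} (hρ : 0 < ρ) (hρε : ρ < ε) :
    MapsTo (radialClamp (E := E) ρ) {y | y ≠ 0} {y | 0 < ‖y‖ ∧ ‖y‖ < ε} := fun y hy => by
  rw [mem_ofPred_eq, norm_radialClamp hρ.le]
  exact ⟨lt_min (norm_pos_iff.2 hy) hρ, (min_le_right _ _).trans_lt hρε⟩

theorem homothety_mem_sphere {p x : E} {r c : ℝ} (hx : x ∈ sphere p r) (hc : 0 ≤ c) :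
    AffineMap.homothety p c x ∈ sphere p (c * r) := by
  rw [mem_sphere, dist_homothety_center, Real.norm_of_nonneg hc, dist_comm, mem_sphere.1 hx]

end

theorem apply_ne_zero_of_mem_sphere_of_isolated_zero {E F : Type*} [PseudoMetricSpace E] [Zero F]
    {f : E → F} {p : E} {R r : ℝ} (hiso : ∀ x ∈ ball p R, f x = 0 → x = p) (hr : r ∈ Ioo 0 R)
    {x : E} (hx : x ∈ sphere p r) : f x ≠ 0 := fun hfx => by
  have hxp := hiso x (mem_ball.2 ((mem_sphere.1 hx).trans_lt hr.2)) hfx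
  rw [hxp, mem_sphere, dist_self] at hx
  exact hr.1.ne hx

theorem isNullHomotopicOn_sphere_of_isolated_zero {n q : ℕ}
    {f : EuclideanSpace ℝ (Fin n) → EuclideanSpace ℝ (Fin q)} {p : EuclideanSpace ℝ (Fin n)}
    {R r₀ r : ℝ} (hf : Continuous f) (hiso : ∀ x ∈ ball p R, f x = 0 → x = p)
    (hr₀ : r₀ ∈ Ioo 0 R) (hr : r ∈ Ioo 0 R) (h : IsNullHomotopicOn f (sphere p r₀) {y | y ≠ 0}) :
    IsNullHomotopicOn f (sphere p r) {y | y ≠ 0} := by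
  have hrescale : ∀ ρ ≥ 0, MapsTo (AffineMap.homothety p (ρ / r)) (sphere p r) (sphere p ρ) :=
    fun ρ hρ x hx => by
      simpa [div_mul_cancel₀ _ hr.1.ne'] using homothety_mem_sphere hx (div_nonneg hρ hr.1.le)
  refine .of_homotopy (fun z => f (AffineMap.homothety p (((1 - z.2) * r + z.2 * r₀) / r) z.1))
    ?_ (fun x _ => ?_) (fun x _ => ?_) (fun x hx t ht => ?_)
    (h.comp_right (AffineMap.homothety_continuous _ _).continuousOn (hrescale r₀ hr₀.1.le))
  · refine (hf.comp ?_).continuousOn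
    simp only [AffineMap.homothety_apply, vsub_eq_sub, vadd_eq_add]
    fun_prop
  · simp [div_self hr.1.ne']
  · simp
  · have hρ : (1 - t) * r + t * r₀ ∈ Ioo 0 R :=
      convex_Ioo 0 R hr hr₀ (sub_nonneg.2 ht.2) ht.1 (sub_add_cancel 1 t)
    exact apply_ne_zero_of_mem_sphere_of_isolated_zero hiso hρ (hrescale _ hρ.1.le hx)

theorem stmt1 {n q : ℕ}
    (f : EuclideanSpace ℝ (Fin n) → EuclideanSpace ℝ (Fin q))
    (p : EuclideanSpace ℝ (Fin n)) (R : ℝ)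
    (hf : Continuous f) (hp : f p = 0) (hR : 0 < R)
    (hiso : ∀ x ∈ ball p R, f x = 0 → x = p)
    (h : ∃ r ∈ Ioo (0:ℝ) R,
      IsNullHomotopicOn f (sphere p r) {y | y ≠ 0}) :
    ∀ ε > (0:ℝ), ∃ δ, 0 < δ ∧ δ ≤ R ∧
      ∀ r ∈ Ioo (0:ℝ) δ,
        IsNullHomotopicOn f (sphere p r) {y | 0 < ‖y‖ ∧ ‖y‖ < ε} := by
  obtain ⟨r₀, hr₀, hnull⟩ := h
  intro ε hε
  obtain ⟨δ, hδ, hfδ⟩ := Metric.continuousAt_iff.1 hf.continuousAt (ε / 2) (half_pos hε)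
  refine ⟨min δ R, lt_min hδ hR, min_le_right _ _, fun r hr => ?_⟩
  have hrR : r ∈ Ioo 0 R := ⟨hr.1, hr.2.trans_le (min_le_right _ _)⟩
  have hsmall : ∀ x ∈ sphere p r, ‖f x‖ ≤ ε / 2 := fun x hx => by
    have hfx := hfδ ((mem_sphere.1 hx).trans_lt (hr.2.trans_le (min_le_left _ _)))
    rw [hp, dist_zero_right] at hfx
    exact hfx.le
  exact ((isNullHomotopicOn_sphere_of_isolated_zero hf hiso hr₀ hrR hnull).comp_left
    (continuousOn_radialClamp _) (mapsTo_radialClamp (half_pos hε) (half_lt_self hε))).congr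
    fun x hx => (radialClamp_of_norm_le (hsmall x hx)).symm
end

section
/- Let f : Ω → ℝᵠ be continuous on an open set Ω ⊆ ℝⁿ with an isolated zero at p, the only zero in B(p,R) ⊆ Ω. Suppose that for every ε > 0 there is δ ∈ (0,R] such that for every r ∈ (0,δ), the restriction of f to S(p,r) is null-homotopic in the punctured ball B*(0,ε) ⊆ ℝᵠ. Then for every ε > 0 and every ρ ∈ (0,R], there exists a continuous map g : Ω → ℝᵠ such that: g = f outside B(p,ρ); ‖g(x) − f(x)‖ < ε for all x ∈ Ω; and g has no zeros in B(p,R). -/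
/-!
Shrink to a sphere `S(p, r)` so small that `‖f‖ < ε/2` on `B(p, r)` and `f|S(p, r)` is
null-homotopic in the punctured ball `B*(0, ε/2)`. Running the null-homotopy along the radii of
`B(p, r)` (time `0` on the sphere, time `1` at the centre) extends `f|S(p, r)` to a zero-free map on
the closed ball with values of norm `< ε/2`; gluing it to `f` outside `B(p, r)` gives `g`, which
is `ε`-close to `f` and has no zero in `B(p, R)` because `p` was the only zero of `f` there.
-/

open Metric Set

section Cone

variable {E Y : Type*} [NormedAddCommGroup E]

theorem one_sub_norm_sub_div_mem_Icc {p x : E} {r : ℝ} (hr : 0 < r) (hx : x ∈ closedBall p r) :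
    1 - ‖x - p‖ / r ∈ Icc (0 : ℝ) 1 := by
  rw [mem_closedBall, dist_eq_norm] at hx
  have : ‖x - p‖ / r ≤ 1 := (div_le_one hr).2 hx
  constructor <;> [linarith; linarith [show 0 ≤ ‖x - p‖ / r by positivity]]

variable [NormedSpace ℝ E]

noncomputable def radialProjection (p : E) (r : ℝ) (x : E) : E := p + (r / ‖x - p‖) • (x - p)

theorem radialProjection_mem_sphere {p x : E} {r : ℝ} (hr : 0 ≤ r) (hx : x ≠ p) :
    radialProjection p r x ∈ sphere p r := by
  have hxp : ‖x - p‖ ≠ 0 := norm_ne_zero_iff.2 (sub_ne_zero.2 hx)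
  rw [mem_sphere_iff_norm, radialProjection, add_sub_cancel_left, norm_smul, Real.norm_eq_abs,
    abs_div, abs_of_nonneg hr, abs_norm, div_mul_cancel₀ r hxp]

theorem radialProjection_of_mem_sphere {p x : E} {r : ℝ} (hx : x ∈ sphere p r) :
    radialProjection p r x = x := by
  rw [mem_sphere_iff_norm] at hx
  rcases eq_or_ne r 0 with rfl | hr
  · rw [norm_eq_zero, sub_eq_zero] at hx
    simp [radialProjection, hx]
  · rw [radialProjection, hx, div_self hr, one_smul, add_sub_cancel]

theorem continuousOn_radialProjection (p : E) (r : ℝ) :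
    ContinuousOn (radialProjection p r) {p}ᶜ := by
  have hsub : Continuous fun x : E => x - p := continuous_id.sub continuous_const
  refine continuousOn_const.add (ContinuousOn.smul ?_ hsub.continuousOn)
  exact continuousOn_const.div hsub.norm.continuousOn
    fun x hx => norm_ne_zero_iff.2 (sub_ne_zero.2 hx)

/-- A homotopy `F` on `sphere p r × [0, 1]` ending at the constant `c`, read along the radii:
the sphere gets `F (·, 0)` and the centre gets `c`. -/
noncomputable def coneMap (F : E × ℝ → Y) (c : Y) (p : E) (r : ℝ) (x : E) : Y :=
  open Classical in
  if x = p then c else F (radialProjection p r x, 1 - ‖x - p‖ / r)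

theorem coneMap_of_mem_sphere {F : E × ℝ → Y} {c : Y} {p x : E} {r : ℝ} (hr : r ≠ 0)
    (hx : x ∈ sphere p r) : coneMap F c p r x = F (x, 0) := by
  have hxp : x ≠ p := ne_of_mem_sphere hx hr
  rw [coneMap, if_neg hxp, radialProjection_of_mem_sphere hx, mem_sphere_iff_norm.1 hx,
    div_self hr, sub_self]

theorem mapsTo_coneMap {F : E × ℝ → Y} {c : Y} {p : E} {r : ℝ} {X : Set Y} (hr : 0 < r)
    (hc : c ∈ X) (hFX : ∀ x ∈ sphere p r, ∀ t ∈ Icc (0 : ℝ) 1, F (x, t) ∈ X) :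
    MapsTo (coneMap F c p r) (closedBall p r) X := by
  intro x hx
  by_cases hxp : x = p
  · rwa [coneMap, if_pos hxp]
  · rw [coneMap, if_neg hxp]
    exact hFX _ (radialProjection_mem_sphere hr.le hxp) _ (one_sub_norm_sub_div_mem_Icc hr hx)

theorem continuousOn_coneMap_of_ne [TopologicalSpace Y] {F : E × ℝ → Y} {c : Y} {p : E}
    {r : ℝ} (hr : 0 < r) (hF : ContinuousOn F (sphere p r ×ˢ Icc (0 : ℝ) 1)) :
    ContinuousOn (coneMap F c p r) (closedBall p r \ {p}) := by
  have hpair : ContinuousOn (fun x => (radialProjection p r x, 1 - ‖x - p‖ / r)) {p}ᶜ :=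
    (continuousOn_radialProjection p r).prodMk
      (continuousOn_const.sub ((continuous_id.sub continuous_const).norm.continuousOn.div_const r))
  refine (hF.comp (hpair.mono fun x hx => hx.2) fun x hx => ?_).congr fun x hx => ?_
  · exact ⟨radialProjection_mem_sphere hr.le hx.2, one_sub_norm_sub_div_mem_Icc hr hx.1⟩
  · rw [Function.comp_apply, coneMap, if_neg (show x ≠ p from hx.2)]

/-- At the centre, continuity comes from uniform continuity of `F` on the compact
`sphere p r × [0, 1]`, together with `F (·, 1) = c`. -/
theorem continuousWithinAt_coneMap_center [ProperSpace E] [PseudoMetricSpace Y]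
    {F : E × ℝ → Y} {c : Y} {p : E} {r : ℝ} (hr : 0 < r)
    (hF : ContinuousOn F (sphere p r ×ˢ Icc (0 : ℝ) 1)) (hF1 : ∀ x ∈ sphere p r, F (x, 1) = c) :
    ContinuousWithinAt (coneMap F c p r) (closedBall p r) p := by
  have hUC := ((isCompact_sphere p r).prod isCompact_Icc).uniformContinuousOn_of_continuous hF
  rw [Metric.uniformContinuousOn_iff] at hUC
  rw [Metric.continuousWithinAt_iff]
  intro ε hε
  obtain ⟨δ, hδ, hFδ⟩ := hUC ε hε
  refine ⟨r * δ, by positivity, fun {x} hx hxδ => ?_⟩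
  by_cases hxp : x = p
  · simp [coneMap, hxp, hε]
  have hπ := radialProjection_mem_sphere hr.le hxp
  have hdist : dist (radialProjection p r x, 1 - ‖x - p‖ / r) (radialProjection p r x, 1) < δ := by
    rw [Prod.dist_eq, dist_self, Real.dist_eq, sub_sub_cancel_left, abs_neg,
      abs_of_nonneg (by positivity), max_eq_right (by positivity), div_lt_iff₀ hr, mul_comm,
      ← dist_eq_norm]
    exact hxδ
  rw [coneMap, coneMap, if_neg hxp, if_pos rfl, ← hF1 _ hπ]
  exact hFδ _ ⟨hπ, one_sub_norm_sub_div_mem_Icc hr hx⟩ _ ⟨hπ, by simp⟩ hdist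

theorem continuousOn_coneMap [ProperSpace E] [PseudoMetricSpace Y] {F : E × ℝ → Y} {c : Y}
    {p : E} {r : ℝ} (hr : 0 < r) (hF : ContinuousOn F (sphere p r ×ˢ Icc (0 : ℝ) 1))
    (hF1 : ∀ x ∈ sphere p r, F (x, 1) = c) :
    ContinuousOn (coneMap F c p r) (closedBall p r) := by
  intro x hx
  rcases eq_or_ne x p with rfl | hxp
  · exact continuousWithinAt_coneMap_center hr hF hF1
  · exact continuousWithinAt_sdiff_singleton.1 (continuousOn_coneMap_of_ne hr hF x ⟨hx, hxp⟩)

end Cone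

theorem ContinuousOn.piecewise_ball {E Y : Type*} [NormedAddCommGroup E] [NormedSpace ℝ E]
    [TopologicalSpace Y] {p : E} {r : ℝ} {s : Set E} {g f : E → Y}
    [∀ x, Decidable (x ∈ ball p r)] (hr : r ≠ 0) (hg : ContinuousOn g (closedBall p r))
    (hf : ContinuousOn f s) (hgf : EqOn g f (sphere p r)) :
    ContinuousOn ((ball p r).piecewise g f) s := by
  refine ContinuousOn.piecewise (fun x hx => hgf ?_) (hg.mono ?_) (hf.mono inter_subset_left)
  · rw [← frontier_ball p hr]; exact hx.2
  · rw [closure_ball p hr]; exact inter_subset_right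

theorem IsNullHomotopicOn.exists_extension_closedBall {n q : ℕ}
    {f : EuclideanSpace ℝ (Fin n) → EuclideanSpace ℝ (Fin q)} {p : EuclideanSpace ℝ (Fin n)}
    {r : ℝ} {X : Set (EuclideanSpace ℝ (Fin q))} (hr : 0 < r)
    (hf : IsNullHomotopicOn f (sphere p r) X) :
    ∃ g, ContinuousOn g (closedBall p r) ∧ EqOn g f (sphere p r) ∧ MapsTo g (closedBall p r) X := by
  obtain ⟨F, c, hc, hF, hF0, hF1, hFX⟩ := hf
  exact ⟨coneMap F c p r, continuousOn_coneMap hr hF hF1,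
    fun x hx => (coneMap_of_mem_sphere hr.ne' hx).trans (hF0 x hx), mapsTo_coneMap hr hc hFX⟩

theorem stmt3_general {n q : ℕ} (Ω : Set (EuclideanSpace ℝ (Fin n)))
    (f : EuclideanSpace ℝ (Fin n) → EuclideanSpace ℝ (Fin q))
    (p : EuclideanSpace ℝ (Fin n)) (R : ℝ)
    (hf : ContinuousOn f Ω)
    (hball : ball p R ⊆ Ω) (hp : f p = 0)
    (hiso : ∀ x ∈ ball p R, f x = 0 → x = p)
    (hinessential : ∀ ε > (0:ℝ), ∃ δ, 0 < δ ∧ δ ≤ R ∧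
      ∀ r ∈ Ioo (0:ℝ) δ,
        IsNullHomotopicOn f (sphere p r) {y | 0 < ‖y‖ ∧ ‖y‖ < ε}) :
    ∀ ε > (0:ℝ), ∀ ρ, 0 < ρ → ρ ≤ R →
      ∃ g : EuclideanSpace ℝ (Fin n) → EuclideanSpace ℝ (Fin q),
        ContinuousOn g Ω ∧
        (∀ x ∈ Ω \ ball p ρ, g x = f x) ∧
        (∀ x ∈ Ω, ‖g x - f x‖ < ε) ∧
        (∀ x ∈ ball p R, g x ≠ 0) := by
  classical
  intro ε hε ρ hρ hρR
  obtain ⟨r₁, hr₁, hf_small⟩ := Metric.continuousWithinAt_iff.1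
    (hf p (hball (mem_ball_self (hρ.trans_le hρR)))) (ε / 2) (half_pos hε)
  obtain ⟨δ, hδ, -, hnull⟩ := hinessential (ε / 2) (half_pos hε)
  set r := min (δ / 2) (min ρ r₁)
  have hr : 0 < r := lt_min (half_pos hδ) (lt_min hρ hr₁)
  obtain ⟨h, hh, hhf, hhX⟩ :=
    (hnull r ⟨hr, (min_le_left _ _).trans_lt (half_lt_self hδ)⟩).exists_extension_closedBall hr
  have hrρ : ball p r ⊆ ball p ρ := ball_subset_ball ((min_le_right _ _).trans (min_le_left _ _))
  refine ⟨(ball p r).piecewise h f, hh.piecewise_ball hr.ne' hf hhf,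
    fun x hx => piecewise_eq_of_notMem _ _ _ fun hxr => hx.2 (hrρ hxr), fun x hx => ?_,
    fun x hx => ?_⟩
  · by_cases hxr : x ∈ ball p r
    · have hfx : ‖f x‖ < ε / 2 := by
        simpa [hp] using hf_small hx ((mem_ball.1 hxr).trans_le
          ((min_le_right _ _).trans (min_le_right _ _)))
      rw [piecewise_eq_of_mem _ _ _ hxr]
      linarith [norm_sub_le (h x) (f x), (hhX (ball_subset_closedBall hxr)).2]
    · rwa [piecewise_eq_of_notMem _ _ _ hxr, sub_self, norm_zero]
  · by_cases hxr : x ∈ ball p r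
    · rw [piecewise_eq_of_mem _ _ _ hxr, ← norm_pos_iff]
      exact (hhX (ball_subset_closedBall hxr)).1
    · rw [piecewise_eq_of_notMem _ _ _ hxr]
      exact fun hfx => hxr (hiso x hx hfx ▸ mem_ball_self hr)

theorem stmt3 {n q : ℕ} (Ω : Set (EuclideanSpace ℝ (Fin n)))
    (f : EuclideanSpace ℝ (Fin n) → EuclideanSpace ℝ (Fin q))
    (p : EuclideanSpace ℝ (Fin n)) (R : ℝ)
    (hΩ : IsOpen Ω) (hf : ContinuousOn f Ω) (hR : 0 < R)
    (hball : ball p R ⊆ Ω) (hp : f p = 0)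
    (hiso : ∀ x ∈ ball p R, f x = 0 → x = p)
    (hinessential : ∀ ε > (0:ℝ), ∃ δ, 0 < δ ∧ δ ≤ R ∧
      ∀ r ∈ Ioo (0:ℝ) δ,
        IsNullHomotopicOn f (sphere p r) {y | 0 < ‖y‖ ∧ ‖y‖ < ε}) :
    ∀ ε > (0:ℝ), ∀ ρ, 0 < ρ → ρ ≤ R →
      ∃ g : EuclideanSpace ℝ (Fin n) → EuclideanSpace ℝ (Fin q),
        ContinuousOn g Ω ∧
        (∀ x ∈ Ω \ ball p ρ, g x = f x) ∧
        (∀ x ∈ Ω, ‖g x - f x‖ < ε) ∧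
        (∀ x ∈ ball p R, g x ≠ 0) :=
  stmt3_general Ω f p R hf hball hp hiso hinessential
end

section
/- Let f : Ω → ℝᵠ be continuous on an open set Ω ⊆ ℝⁿ with an isolated zero at p, the only zero in B(p,R) ⊆ Ω. Suppose that for every ε > 0 and every ρ ∈ (0,R] there exists a continuous g : Ω → ℝᵠ with g = f outside B(p,ρ), ‖g − f‖ < ε everywhere, and g nonvanishing on B(p,R). Then for every r ∈ (0,R), the restriction of f to the sphere S(p,r) is null-homotopic as a map into ℝᵠ \ {0}. -/
open Metric Set

theorem stmt4 {n q : ℕ} (Ω : Set (EuclideanSpace ℝ (Fin n)))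
    (f : EuclideanSpace ℝ (Fin n) → EuclideanSpace ℝ (Fin q))
    (p : EuclideanSpace ℝ (Fin n)) (R : ℝ)
    (hΩ : IsOpen Ω) (hf : ContinuousOn f Ω) (hR : 0 < R)
    (hball : ball p R ⊆ Ω) (hp : f p = 0)
    (hiso : ∀ x ∈ ball p R, f x = 0 → x = p)
    (happrox : ∀ ε > (0:ℝ), ∀ ρ, 0 < ρ → ρ ≤ R →
      ∃ g : EuclideanSpace ℝ (Fin n) → EuclideanSpace ℝ (Fin q),
        ContinuousOn g Ω ∧
        (∀ x ∈ Ω \ ball p ρ, g x = f x) ∧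
        (∀ x ∈ Ω, ‖g x - f x‖ < ε) ∧
        (∀ x ∈ ball p R, g x ≠ 0)) :
    ∀ r ∈ Ioo (0:ℝ) R, IsNullHomotopicOn f (sphere p r) {y | y ≠ 0} := by
  intro r hr
  obtain ⟨g, hg_cont, hg_eq, -, hg_ne⟩ :=
    happrox 1 one_pos (r/2) (by linarith [hr.1]) (by linarith [hr.1, hr.2])
  have key : ∀ x ∈ sphere p r, ∀ t ∈ Icc (0:ℝ) 1,
      ((1 - t) • x + t • p) ∈ ball p R := by
    intro x hx t ht
    have hx' : dist x p = r := hx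
    rw [mem_ball, dist_eq_norm]
    have h1 : (1 - t) • x + t • p - p = (1 - t) • (x - p) := by module
    have h2 : ‖x - p‖ = r := by rw [← dist_eq_norm]; exact hx'
    rw [h1, norm_smul, h2, Real.norm_eq_abs, abs_of_nonneg (by linarith [ht.2])]
    nlinarith [ht.1, ht.2, hr.1, hr.2]
  refine ⟨fun z => g ((1 - z.2) • z.1 + z.2 • p), g p,
    hg_ne p (mem_ball_self hR), ?_, ?_, ?_, ?_⟩
  · apply hg_cont.comp
    · exact Continuous.continuousOn (((continuous_const.sub continuous_snd).smul continuous_fst).add (continuous_snd.smul continuous_const))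
    · rintro ⟨x, t⟩ ⟨hx, ht⟩
      exact hball (key x hx t ht)
  · intro x hx
    have hx' : dist x p = r := hx
    simp only [sub_zero, one_smul, zero_smul, add_zero]
    apply hg_eq
    refine ⟨hball (by rw [mem_ball, hx']; exact hr.2), ?_⟩
    rw [mem_ball, hx']
    linarith [hr.1]
  · intro x hx
    simp only [sub_self, zero_smul, one_smul, zero_add]
  · intro x hx t ht
    exact hg_ne _ (key x hx t ht)
end

section
/- Let f : Ω → ℝᵠ be continuous with an isolated zero at p, the only zero in B(p,R) ⊆ Ω. Suppose there exist r₀ ∈ (0,R) and a continuous map F : B(p,r₀) × [0,1] → ℝᵠ such that F(x,0) = f(x) for all x ∈ B(p,r₀) and F(x,t) ≠ 0 whenever t > 0. Then p is a locally inessential zero of f, i.e., for every ε > 0 there is δ ∈ (0,R] such that for all r ∈ (0,δ), the restriction of f to the punctured ball B*(p,r) is null-homotopic as a map into B*(0,ε) ⊆ ℝᵠ. -/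
open Metric Set

theorem stmt5 {n q : ℕ} (Ω : Set (EuclideanSpace ℝ (Fin n)))
    (f : EuclideanSpace ℝ (Fin n) → EuclideanSpace ℝ (Fin q))
    (p : EuclideanSpace ℝ (Fin n)) (R : ℝ)
    (hΩ : IsOpen Ω) (hf : ContinuousOn f Ω) (hR : 0 < R)
    (hball : ball p R ⊆ Ω) (hp : f p = 0)
    (hiso : ∀ x ∈ ball p R, f x = 0 → x = p)
    (r₀ : ℝ) (hr₀ : r₀ ∈ Ioo (0:ℝ) R)
    (F : EuclideanSpace ℝ (Fin n) × ℝ → EuclideanSpace ℝ (Fin q))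
    (hFcont : ContinuousOn F (ball p r₀ ×ˢ Icc (0:ℝ) 1))
    (hF0 : ∀ x ∈ ball p r₀, F (x, 0) = f x)
    (hFne : ∀ x ∈ ball p r₀, ∀ t ∈ Icc (0:ℝ) 1, 0 < t → F (x, t) ≠ 0) :
    ∀ ε > (0:ℝ), ∃ δ, 0 < δ ∧ δ ≤ R ∧
      ∀ r ∈ Ioo (0:ℝ) δ,
        IsNullHomotopicOn f {x | 0 < dist x p ∧ dist x p < r}
          {y | 0 < ‖y‖ ∧ ‖y‖ < ε} := by
  intro ε hε
  have hpmem : (p, (0:ℝ)) ∈ ball p r₀ ×ˢ Icc (0:ℝ) 1 := by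
    refine ⟨by simpa using hr₀.1, ⟨le_refl 0, zero_le_one⟩⟩
  have hcw : ContinuousWithinAt F (ball p r₀ ×ˢ Icc (0:ℝ) 1) (p, 0) := hFcont _ hpmem
  have hF00 : F (p, 0) = 0 := by
    rw [hF0 p (by simpa using hr₀.1), hp]
  rw [Metric.continuousWithinAt_iff] at hcw
  obtain ⟨η, hη, hηball⟩ := hcw ε hε
  set τ : ℝ := min η 1 / 2 with hτdef
  have hτpos : 0 < τ := half_pos (lt_min hη one_pos)
  have hτη : τ < η := (half_lt_self (lt_min hη one_pos)).trans_le (min_le_left _ _)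
  have hτ1 : τ ≤ 1 := by
    have : min η 1 ≤ 1 := min_le_right _ _
    linarith
  -- small values lemma
  have hsmall : ∀ y ∈ ball p r₀, ∀ s ∈ Icc (0:ℝ) 1,
      dist y p < η → s < η → ‖F (y, s)‖ < ε := by
    intro y hy s hs hy' hs'
    have hmem : (y, s) ∈ ball p r₀ ×ˢ Icc (0:ℝ) 1 := ⟨hy, hs⟩
    have hd : dist (y, s) (p, (0:ℝ)) < η := by
      rw [Prod.dist_eq]
      simp only [Real.dist_eq, sub_zero]
      rw [abs_of_nonneg hs.1]
      exact max_lt hy' hs'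
    have := hηball hmem hd
    rwa [hF00, dist_zero_right] at this
  refine ⟨min η r₀, lt_min hη hr₀.1, (min_le_right _ _).trans hr₀.2.le, ?_⟩
  intro r hr
  have hrr₀ : r < r₀ := lt_of_lt_of_le hr.2 (min_le_right _ _)
  have hrη : r < η := lt_of_lt_of_le hr.2 (min_le_left _ _)
  set A : Set (EuclideanSpace ℝ (Fin n)) := {x | 0 < dist x p ∧ dist x p < r} with hA
  -- facts about points of A
  have hAball : ∀ x ∈ A, x ∈ ball p r₀ := fun x hx => mem_ball.2 (hx.2.trans hrr₀)
  -- the combined homotopy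
  set G : EuclideanSpace ℝ (Fin n) × ℝ → EuclideanSpace ℝ (Fin q) :=
    fun z => F (p + (min 1 (2 - 2 * z.2)) • (z.1 - p), min (2 * z.2) 1 * τ) with hG
  -- the parameters stay in range
  have hparam : ∀ x ∈ A, ∀ t ∈ Icc (0:ℝ) 1,
      (p + (min 1 (2 - 2 * t)) • (x - p)) ∈ ball p r₀ ∧
      dist (p + (min 1 (2 - 2 * t)) • (x - p)) p ≤ dist x p ∧
      min (2 * t) 1 * τ ∈ Icc (0:ℝ) 1 ∧ min (2 * t) 1 * τ ≤ τ := by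
    intro x hx t ht
    have hm0 : 0 ≤ min 1 (2 - 2 * t) := le_min one_pos.le (by linarith [ht.2])
    have hm1 : min 1 (2 - 2 * t) ≤ 1 := min_le_left _ _
    have hdist : dist (p + (min 1 (2 - 2 * t)) • (x - p)) p ≤ dist x p := by
      rw [dist_eq_norm, add_sub_cancel_left, norm_smul, Real.norm_eq_abs,
        abs_of_nonneg hm0, dist_eq_norm]
      calc min 1 (2 - 2 * t) * ‖x - p‖ ≤ 1 * ‖x - p‖ := by
            exact mul_le_mul_of_nonneg_right hm1 (norm_nonneg _)
        _ = ‖x - p‖ := one_mul _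
    have hk0 : 0 ≤ min (2 * t) 1 := le_min (by linarith [ht.1]) one_pos.le
    have hk1 : min (2 * t) 1 ≤ 1 := min_le_right _ _
    have hkτ : min (2 * t) 1 * τ ≤ τ := by
      nlinarith
    refine ⟨mem_ball.2 (lt_of_le_of_lt hdist (hx.2.trans hrr₀)), hdist,
      ⟨mul_nonneg hk0 hτpos.le, hkτ.trans hτ1⟩, hkτ⟩
  refine ⟨G, F (p, τ), ?_, ?_, ?_, ?_, ?_⟩
  · -- c ∈ X
    constructor
    · rw [norm_pos_iff]
      exact hFne p (by simpa using hr₀.1) τ ⟨hτpos.le, hτ1⟩ hτpos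
    · exact hsmall p (by simpa using hr₀.1) τ ⟨hτpos.le, hτ1⟩ (by simpa using hη) hτη
  · -- continuity
    have hφ : Continuous (fun z : EuclideanSpace ℝ (Fin n) × ℝ =>
        ((p + (min 1 (2 - 2 * z.2)) • (z.1 - p), min (2 * z.2) 1 * τ) :
          EuclideanSpace ℝ (Fin n) × ℝ)) := by
      fun_prop
    refine ContinuousOn.comp hFcont hφ.continuousOn ?_
    intro z hz
    obtain ⟨h1, h2, h3, _⟩ := hparam z.1 hz.1 z.2 hz.2
    exact ⟨h1, h3⟩
  · -- t = 0
    intro x hx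
    simp only [hG]
    norm_num
    exact hF0 x (hAball x hx)
  · -- t = 1
    intro x hx
    simp only [hG]
    norm_num
  · -- values in X
    intro x hx t ht
    obtain ⟨h1, h2, h3, h4⟩ := hparam x hx t ht
    constructor
    · rw [norm_pos_iff]
      rcases eq_or_lt_of_le (mul_nonneg
          (show (0:ℝ) ≤ min (2 * t) 1 from le_min (by linarith [ht.1]) one_pos.le)
          hτpos.le) with heq | hlt
      · -- time is 0, so t = 0 and value is f x ≠ 0
        have hmin0 : min (2 * t) 1 = 0 := by
          rcases mul_eq_zero.1 heq.symm with h | h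
          · exact h
          · exact absurd h hτpos.ne'
        have ht0 : t = 0 := by
          rcases min_eq_iff.1 hmin0 with ⟨h, _⟩ | ⟨h, _⟩
          · linarith
          · linarith
        subst ht0
        show F (p + (min 1 (2 - 2 * (0:ℝ))) • (x - p), min (2 * (0:ℝ)) 1 * τ) ≠ 0
        norm_num
        rw [hF0 x (hAball x hx)]
        intro hfx
        have hxR : x ∈ ball p R := mem_ball.2 (hx.2.trans (hrr₀.trans hr₀.2))
        have hxp := hiso x hxR hfx
        have h0 := hx.1
        rw [hxp] at h0
        simp at h0
      · exact hFne _ h1 _ h3 hlt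
    · exact hsmall _ h1 _ h3 (lt_of_le_of_lt h2 (hx.2.trans hrη)) (lt_of_le_of_lt h4 hτη)
end

section
/- Let z, w be nonzero complex numbers and k ≥ 1 an integer. If the principal argument of z/w satisfies |Arg(z/w)| < π/(2k), then |w − z|^k ≤ |w^k − z^k|. -/
/-!
Factor `w ^ k - z ^ k = ∏ (w - ζ z)` over the `k`-th roots of unity `ζ`. All points `ζ z` lie on
the circle of radius `‖z‖`, and for `ζ ≠ 1` the angle between `z` and `ζ z` is at least `2π / k`.
Since the angle between `w` and `z` is less than `π / (2k)`, the triangle inequality for angles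
makes `z` the point of that circle seen from `w` under the smallest angle, hence, by the law of
cosines, the closest one. So every factor has norm at least `‖w - z‖`.
-/

open Complex InnerProductGeometry Finset Polynomial
open scoped Real

theorem norm_sub_le_norm_sub_of_angle_le {V : Type*} [NormedAddCommGroup V]
    [InnerProductSpace ℝ V] {x y y' : V} (hy : ‖y‖ = ‖y'‖) (h : angle x y ≤ angle x y') :
    ‖x - y‖ ≤ ‖x - y'‖ := by
  have hcos : Real.cos (angle x y') ≤ Real.cos (angle x y) :=
    Real.cos_le_cos_of_nonneg_of_le_pi (angle_nonneg x y) (angle_le_pi x y') h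
  refine (mul_self_le_mul_self_iff (norm_nonneg _) (norm_nonneg _)).mpr ?_
  rw [norm_sub_sq_eq_norm_sq_add_norm_sq_sub_two_mul_norm_mul_norm_mul_cos_angle,
    norm_sub_sq_eq_norm_sq_add_norm_sq_sub_two_mul_norm_mul_norm_mul_cos_angle, hy]
  gcongr

namespace Complex

theorem two_pi_div_le_abs_arg_of_pow_eq_one {ζ : ℂ} {k : ℕ} (hk : k ≠ 0) (hζ : ζ ^ k = 1)
    (hζ1 : ζ ≠ 1) : 2 * π / k ≤ |ζ.arg| := by
  have hfin : IsOfFinOrder ζ := isOfFinOrder_iff_pow_eq_one.mpr ⟨k, Nat.pos_of_ne_zero hk, hζ⟩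
  have hprim : IsPrimitiveRoot ζ (orderOf ζ) := IsPrimitiveRoot.orderOf ζ
  have hm0 : orderOf ζ ≠ 0 := hfin.orderOf_pos.ne'
  have hmk : (orderOf ζ : ℝ) ≤ k := by
    exact_mod_cast Nat.le_of_dvd (Nat.pos_of_ne_zero hk) (orderOf_dvd_of_pow_eq_one hζ)
  obtain ⟨i, harg, -, -⟩ := hprim.arg hm0
  have hi : (1 : ℝ) ≤ |(i : ℝ)| := by
    have : i ≠ 0 := by
      rintro rfl
      exact hζ1 ((hprim.arg_eq_zero_iff hm0).mp (by simpa using harg))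
    exact_mod_cast Int.one_le_abs this
  have hm : (0 : ℝ) < orderOf ζ := by exact_mod_cast Nat.pos_of_ne_zero hm0
  calc 2 * π / k ≤ 2 * π / orderOf ζ := by gcongr
    _ = 1 / orderOf ζ * (2 * π) := by ring
    _ ≤ |(i : ℝ)| / orderOf ζ * (2 * π) := by gcongr
    _ = |ζ.arg| := by rw [harg, abs_mul, abs_div, Nat.abs_cast, abs_of_pos Real.two_pi_pos]

theorem norm_sub_le_norm_sub_mul_of_pow_eq_one {z w ζ : ℂ} {k : ℕ} (hz : z ≠ 0) (hw : w ≠ 0)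
    (harg : |(z / w).arg| < π / (2 * k)) (hζ : ζ ^ k = 1) : ‖w - z‖ ≤ ‖w - ζ * z‖ := by
  obtain rfl | hζ1 := eq_or_ne ζ 1
  · rw [one_mul]
  have hk : k ≠ 0 := by
    rintro rfl
    simpa using (abs_nonneg _).trans_lt harg
  have hnorm : ‖z‖ = ‖ζ * z‖ := by rw [norm_mul, norm_eq_one_of_pow_eq_one hζ hk, one_mul]
  have hwz : angle w z < π / (2 * k) := by rwa [angle_comm, angle_eq_abs_arg hz hw]
  have hzζz : 2 * π / k ≤ angle z (ζ * z) := by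
    have hζ0 : ζ ≠ 0 := by
      rintro rfl
      simp [hk] at hζ
    rw [show angle z (ζ * z) = angle 1 ζ by simpa using angle_mul_right hz 1 ζ,
      angle_one_left hζ0]
    exact two_pi_div_le_abs_arg_of_pow_eq_one hk hζ hζ1
  have htri := angle_le_angle_add_angle z w (ζ * z)
  have hquarter : 2 * π / k = 4 * (π / (2 * k)) := by field_simp; ring
  refine norm_sub_le_norm_sub_of_angle_le hnorm ?_
  rw [angle_comm z w] at htri
  linarith [angle_nonneg w z]

end Complex

theorem stmt6 (z w : ℂ) (hz : z ≠ 0) (hw : w ≠ 0) (k : ℕ) (hk : 1 ≤ k)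
    (harg : |Complex.arg (z / w)| < Real.pi / (2 * k)) :
    ‖w - z‖ ^ k ≤ ‖w ^ k - z ^ k‖ := by
  have hprim := isPrimitiveRoot_exp k (by omega)
  rw [hprim.pow_sub_pow_eq_prod_sub_mul w z hk, norm_prod]
  calc ‖w - z‖ ^ k = ∏ _ζ ∈ nthRootsFinset k (1 : ℂ), ‖w - z‖ := by
        rw [prod_const, hprim.card_nthRootsFinset]
    _ ≤ ∏ ζ ∈ nthRootsFinset k (1 : ℂ), ‖w - ζ * z‖ :=
        prod_le_prod (fun _ _ ↦ norm_nonneg _) fun ζ hζ ↦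
          norm_sub_le_norm_sub_mul_of_pow_eq_one hz hw harg ((mem_nthRootsFinset hk 1).mp hζ)
end

section
/- Let R > 0, let n, k ≥ 1 be integers, and let g : B(0,R) ⊆ ℝⁿ → ℂ be continuous with Re(g(x)) ≥ 0 for all x, with equality only at x = 0 where g(0) = 0. If the k-th power g^k is Lipschitz on B(0,R) with constant C₁ (i.e., |g(y)^k − g(x)^k| ≤ C₁‖y − x‖ for all x, y), then g is Hölder continuous with exponent 1/k on B(0,R): there is C₂ such that |g(y) − g(x)| ≤ C₂‖y − x‖^{1/k} for all x, y ∈ B(0,R). Moreover one may take C₂ = 2k·C₁^{1/k}. -/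
/-!
Restrict `g` to the segment `[x, y]` and put `D = (C₁ ‖y - x‖)^(1/k)`, so that `g^k` stays within
`D^k` of `g(x)^k` along the segment. If `‖g x‖ ≤ D`, then also `‖g y‖ ≤ 2D` and the bound is
immediate. Otherwise `g^k` stays in a disc around `g(x)^k` that misses `0`, so `g` does not
vanish on the segment and takes values in the open right half-plane, where `arg` is continuous.
The rotated difference `g(z)^k · conj (g(x)^k)` has positive real part, so the continuous angle
`k (arg g(z) - arg g(x))` starts at `0` and never reaches `±π/2`. Its imaginary part then bounds
`‖g y‖ |sin (k (arg g(y) - arg g(x)))|` by `D`. Jordan's inequality turns this into a bound on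
the angular part of `g y - g x`, and the radial part is at most `D` because `t ↦ t^k` is
superadditive on `[0, ∞)`.
-/

open Metric Set Complex Real ComplexConjugate

lemma abs_sub_le_of_abs_pow_sub_pow_le {k : ℕ} (hk : k ≠ 0) {a b c : ℝ} (ha : 0 ≤ a)
    (hb : 0 ≤ b) (hc : 0 ≤ c) (h : |a ^ k - b ^ k| ≤ c ^ k) : |a - b| ≤ c := by
  wlog hba : b ≤ a generalizing a b
  · rw [abs_sub_comm] at h ⊢
    exact this hb ha h (le_of_not_ge hba)
  have hsplit : (a - b) ^ k + b ^ k ≤ a ^ k := by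
    simpa using pow_add_pow_le (sub_nonneg.2 hba) hb hk
  rw [abs_of_nonneg (sub_nonneg.2 hba)]
  exact le_of_pow_le_pow_left₀ hk hc (by linarith [le_abs_self (a ^ k - b ^ k)])

lemma norm_sub_le_three_mul_of_norm_pow_sub_pow_le {𝕜 : Type*} [NormedDivisionRing 𝕜] {k : ℕ}
    (hk : k ≠ 0) {a b : 𝕜} {D : ℝ} (hb : ‖b‖ ≤ D) (hpow : ‖a ^ k - b ^ k‖ ≤ D ^ k) :
    ‖a - b‖ ≤ 3 * D := by
  have hD : 0 ≤ D := (norm_nonneg b).trans hb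
  have ha : ‖a‖ ≤ 2 * D := by
    refine le_of_pow_le_pow_left₀ hk (by positivity) ?_
    calc ‖a‖ ^ k ≤ ‖a ^ k - b ^ k‖ + ‖b ^ k‖ := by
          rw [← norm_pow]; exact norm_le_norm_sub_add _ _
      _ ≤ 2 * D ^ k := by rw [norm_pow]; linarith [pow_le_pow_left₀ (norm_nonneg b) hb k]
      _ ≤ 2 ^ k * D ^ k := by gcongr; exact le_self_pow₀ one_le_two hk
      _ = (2 * D) ^ k := (mul_pow _ _ _).symm
  linarith [norm_sub_le a b]

namespace Complex

lemma norm_exp_ofReal_mul_I_sub_exp_ofReal_mul_I_le (x y : ℝ) :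
    ‖exp (x * I) - exp (y * I)‖ ≤ |x - y| := by
  have hfactor : exp (x * I) - exp (y * I) = exp (y * I) * (exp (I * (x - y : ℝ)) - 1) := by
    rw [mul_sub, ← exp_add, mul_one]
    push_cast
    ring_nf
  rw [hfactor, norm_mul, norm_exp_ofReal_mul_I, one_mul]
  exact Real.norm_exp_I_mul_ofReal_sub_one_le

lemma norm_sub_le_norm_mul_abs_arg_sub_add (a b : ℂ) :
    ‖a - b‖ ≤ ‖a‖ * |arg a - arg b| + |‖a‖ - ‖b‖| := by
  have hpolar : a - b = ‖a‖ * (exp (arg a * I) - exp (arg b * I))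
      + (‖a‖ - ‖b‖ : ℝ) * exp (arg b * I) := by
    conv_lhs => rw [← norm_mul_exp_arg_mul_I a, ← norm_mul_exp_arg_mul_I b]
    push_cast
    ring
  rw [hpolar]
  refine (norm_add_le _ _).trans (add_le_add ?_ ?_)
  · rw [norm_mul, norm_real, Real.norm_of_nonneg (norm_nonneg a)]
    gcongr
    exact norm_exp_ofReal_mul_I_sub_exp_ofReal_mul_I_le _ _
  · rw [norm_mul, norm_exp_ofReal_mul_I, mul_one, norm_real, Real.norm_eq_abs]

lemma re_mul_conj_pos_of_norm_sub_lt {a b : ℂ} (h : ‖a - b‖ < ‖b‖) :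
    0 < (a * conj b).re := by
  have hsq : normSq (a - b) < normSq b := by
    rw [← Complex.sq_norm, ← Complex.sq_norm]
    exact pow_lt_pow_left₀ h (norm_nonneg _) two_ne_zero
  rw [normSq_sub] at hsq
  linarith [normSq_nonneg a]

lemma abs_im_mul_conj_le (a b : ℂ) : |(a * conj b).im| ≤ ‖a - b‖ * ‖b‖ := by
  have him : (a * conj b).im = ((a - b) * conj b).im := by
    rw [sub_mul, mul_conj, sub_im, ofReal_im, sub_zero]
  rw [him, ← norm_conj b, ← norm_mul]
  exact abs_im_le_norm _

lemma pow_mul_conj_pow (a b : ℂ) (k : ℕ) :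
    a ^ k * conj (b ^ k) = (‖a‖ ^ k * ‖b‖ ^ k : ℝ) * exp ((k * (arg a - arg b) : ℝ) * I) := by
  conv_lhs => rw [← norm_mul_exp_arg_mul_I a, ← norm_mul_exp_arg_mul_I b]
  simp only [mul_pow, ← exp_nat_mul, map_mul, map_pow, ← exp_conj, conj_ofReal, conj_I,
    map_natCast]
  rw [mul_mul_mul_comm, ← exp_add]
  push_cast
  ring_nf

lemma re_pow_mul_conj_pow (a b : ℂ) (k : ℕ) :
    (a ^ k * conj (b ^ k)).re = ‖a‖ ^ k * ‖b‖ ^ k * Real.cos (k * (arg a - arg b)) := by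
  rw [pow_mul_conj_pow, re_ofReal_mul, exp_ofReal_mul_I_re]

lemma im_pow_mul_conj_pow (a b : ℂ) (k : ℕ) :
    (a ^ k * conj (b ^ k)).im = ‖a‖ ^ k * ‖b‖ ^ k * Real.sin (k * (arg a - arg b)) := by
  rw [pow_mul_conj_pow, im_ofReal_mul, exp_ofReal_mul_I_im]

lemma norm_sub_le_of_norm_pow_sub_pow_le_of_abs_mul_arg_sub_le {k : ℕ} (hk : k ≠ 0) {a b : ℂ}
    (hb : b ≠ 0) {D : ℝ} (hD : 0 ≤ D) (hpow : ‖a ^ k - b ^ k‖ ≤ D ^ k)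
    (harg : |k * (arg a - arg b)| ≤ π / 2) :
    ‖a - b‖ ≤ (π / (2 * k) + 1) * D := by
  set θ := (k : ℝ) * (arg a - arg b) with hθ
  have hbk : 0 < ‖b‖ ^ k := pow_pos (norm_pos_iff.2 hb) k
  have hsin_pow : ‖a‖ ^ k * |Real.sin θ| ≤ D ^ k := by
    refine le_of_mul_le_mul_right ?_ hbk
    calc ‖a‖ ^ k * |Real.sin θ| * ‖b‖ ^ k = |(a ^ k * conj (b ^ k)).im| := by
          rw [im_pow_mul_conj_pow, abs_mul, abs_of_nonneg (by positivity : (0 : ℝ) ≤ _ * _)]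
          ring
      _ ≤ ‖a ^ k - b ^ k‖ * ‖b ^ k‖ := abs_im_mul_conj_le _ _
      _ ≤ D ^ k * ‖b‖ ^ k := by rw [norm_pow]; gcongr
  have hsin : ‖a‖ * |Real.sin θ| ≤ D := by
    refine le_of_pow_le_pow_left₀ hk hD ?_
    calc (‖a‖ * |Real.sin θ|) ^ k = ‖a‖ ^ k * |Real.sin θ| ^ k := mul_pow _ _ _
      _ ≤ ‖a‖ ^ k * |Real.sin θ| := by
          gcongr; exact pow_le_of_le_one (abs_nonneg _) (Real.abs_sin_le_one _) hk
      _ ≤ D ^ k := hsin_pow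
  have hangle : ‖a‖ * |arg a - arg b| ≤ π / (2 * k) * D := by
    have hjordan := Real.mul_abs_le_abs_sin harg
    rw [hθ, abs_mul, Nat.abs_cast] at hjordan
    calc ‖a‖ * |arg a - arg b| = π / (2 * k) * (‖a‖ * (2 / π * (k * |arg a - arg b|))) := by
          field_simp
      _ ≤ π / (2 * k) * (‖a‖ * |Real.sin θ|) := by gcongr
      _ ≤ π / (2 * k) * D := by gcongr
  have hnorm : |‖a‖ - ‖b‖| ≤ D := by
    refine abs_sub_le_of_abs_pow_sub_pow_le hk (norm_nonneg a) (norm_nonneg b) hD ?_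
    rw [← norm_pow, ← norm_pow]
    exact (abs_norm_sub_norm_le _ _).trans hpow
  linarith [norm_sub_le_norm_mul_abs_arg_sub_add a b]

end Complex

lemma IsPreconnected.abs_lt_pi_div_two_of_cos_pos {X : Type*} [TopologicalSpace X] {S : Set X}
    (hS : IsPreconnected S) {θ : X → ℝ} (hθ : ContinuousOn θ S) {x y : X} (hx : x ∈ S)
    (hy : y ∈ S) (hθx : θ x = 0) (hcos : ∀ z ∈ S, 0 < Real.cos (θ z)) : |θ y| < π / 2 := by
  by_contra! hbig
  obtain ⟨z, hz, hcos_z⟩ : ∃ z ∈ S, Real.cos (θ z) = 0 := by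
    rcases le_abs'.1 hbig with hneg | hpos
    · obtain ⟨z, hz, hθz⟩ := hS.intermediate_value hy hx hθ
        ⟨hneg, by rw [hθx]; linarith [pi_pos]⟩
      exact ⟨z, hz, by rw [hθz, Real.cos_neg, Real.cos_pi_div_two]⟩
    · obtain ⟨z, hz, hθz⟩ := hS.intermediate_value hx hy hθ
        ⟨by rw [hθx]; linarith [pi_pos], hpos⟩
      exact ⟨z, hz, by rw [hθz, Real.cos_pi_div_two]⟩
  exact (hcos z hz).ne' hcos_z

lemma IsPreconnected.abs_mul_arg_sub_lt_pi_div_two {X : Type*} [TopologicalSpace X] {S : Set X}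
    (hS : IsPreconnected S) {f : X → ℂ} (hf : ContinuousOn f S) (hre : ∀ z ∈ S, 0 < (f z).re)
    {k : ℕ} {x y : X} (hx : x ∈ S) (hy : y ∈ S)
    (hclose : ∀ z ∈ S, ‖f z ^ k - f x ^ k‖ < ‖f x ^ k‖) :
    |k * (arg (f y) - arg (f x))| < π / 2 := by
  have harg : ContinuousOn (fun z ↦ arg (f z)) S := fun z hz ↦
    (continuousAt_arg (mem_slitPlane_iff.2 (Or.inl (hre z hz)))).comp_continuousWithinAt (hf z hz)
  refine hS.abs_lt_pi_div_two_of_cos_pos (θ := fun z ↦ k * (arg (f z) - arg (f x)))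
    (continuousOn_const.mul (harg.sub continuousOn_const)) hx hy (by simp) fun z hz ↦ ?_
  have hre_pos := re_mul_conj_pos_of_norm_sub_lt (hclose z hz)
  rw [re_pow_mul_conj_pow] at hre_pos
  exact pos_of_mul_pos_right hre_pos (by positivity)

theorem IsPreconnected.norm_sub_le_of_norm_pow_sub_pow_le {X : Type*} [TopologicalSpace X]
    {S : Set X} (hS : IsPreconnected S) {f : X → ℂ} (hf : ContinuousOn f S)
    (hre : ∀ z ∈ S, f z = 0 ∨ 0 < (f z).re) {k : ℕ} (hk : 1 ≤ k) {D : ℝ} (hD : 0 ≤ D)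
    {x y : X} (hx : x ∈ S) (hy : y ∈ S) (hpow : ∀ z ∈ S, ‖f z ^ k - f x ^ k‖ ≤ D ^ k) :
    ‖f y - f x‖ ≤ 2 * k * D := by
  obtain rfl | hk2 := hk.eq_or_lt
  · simpa using (hpow y hy).trans (by linarith)
  have hk0 : k ≠ 0 := by omega
  have hk2R : (2 : ℝ) ≤ k := by exact_mod_cast hk2
  rcases le_or_gt ‖f x‖ D with hsmall | hlarge
  · calc ‖f y - f x‖ ≤ 3 * D :=
          norm_sub_le_three_mul_of_norm_pow_sub_pow_le hk0 hsmall (hpow y hy)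
      _ ≤ 2 * k * D := by gcongr; linarith
  have hclose : ∀ z ∈ S, ‖f z ^ k - f x ^ k‖ < ‖f x ^ k‖ := fun z hz ↦
    (hpow z hz).trans_lt (by rw [norm_pow]; gcongr)
  have hpos : ∀ z ∈ S, 0 < (f z).re := fun z hz ↦ (hre z hz).resolve_left fun h0 ↦ by
    simpa [h0, zero_pow hk0] using hclose z hz
  have hfx : f x ≠ 0 := norm_pos_iff.1 (hD.trans_lt hlarge)
  calc ‖f y - f x‖ ≤ (π / (2 * k) + 1) * D :=
        norm_sub_le_of_norm_pow_sub_pow_le_of_abs_mul_arg_sub_le hk0 hfx hD (hpow y hy)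
          (hS.abs_mul_arg_sub_lt_pi_div_two hf hpos hx hy hclose).le
    _ ≤ 2 * k * D := by
        gcongr
        have : π / (2 * k) ≤ 1 := by
          rw [div_le_one (by positivity)]; linarith [pi_le_four]
        linarith

theorem stmt8_general {n : ℕ} (R : ℝ) (k : ℕ) (hk : 1 ≤ k)
    (g : EuclideanSpace ℝ (Fin n) → ℂ) (C₁ : ℝ)
    (hcont : ContinuousOn g (ball 0 R))
    (hre : ∀ x ∈ ball (0 : EuclideanSpace ℝ (Fin n)) R, 0 ≤ (g x).re)
    (heq : ∀ x ∈ ball (0 : EuclideanSpace ℝ (Fin n)) R, (g x).re = 0 → x = 0)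
    (hg0 : g 0 = 0)
    (hlip : ∀ x ∈ ball (0 : EuclideanSpace ℝ (Fin n)) R,
      ∀ y ∈ ball (0 : EuclideanSpace ℝ (Fin n)) R,
        ‖(g y) ^ k - (g x) ^ k‖ ≤ C₁ * ‖y - x‖) :
    ∀ x ∈ ball (0 : EuclideanSpace ℝ (Fin n)) R,
      ∀ y ∈ ball (0 : EuclideanSpace ℝ (Fin n)) R,
        ‖g y - g x‖ ≤
          (2 * k) * C₁ ^ ((1:ℝ) / k) * ‖y - x‖ ^ ((1:ℝ) / k) := by
  intro x hx y hy
  rcases eq_or_ne x y with rfl | hxy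
  · simp [Real.zero_rpow (by positivity : (k⁻¹ : ℝ) ≠ 0)]
  have hC₁ : 0 ≤ C₁ := nonneg_of_mul_nonneg_left ((norm_nonneg _).trans (hlip x hx y hy))
    (norm_pos_iff.2 (sub_ne_zero.2 hxy.symm))
  have hseg : segment ℝ x y ⊆ ball 0 R := (convex_ball 0 R).segment_subset hx hy
  have hre' : ∀ z ∈ segment ℝ x y, g z = 0 ∨ 0 < (g z).re := fun z hz ↦
    (hre z (hseg hz)).eq_or_lt.imp (fun h ↦ by rw [heq z (hseg hz) h.symm, hg0]) id
  have hpow : ∀ z ∈ segment ℝ x y,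
      ‖g z ^ k - g x ^ k‖ ≤ ((C₁ * ‖y - x‖) ^ (k⁻¹ : ℝ)) ^ k := fun z hz ↦ by
    rw [Real.rpow_inv_natCast_pow (by positivity) (by omega)]
    exact (hlip x hx z (hseg hz)).trans (by gcongr; exact norm_sub_le_of_mem_segment hz)
  calc ‖g y - g x‖ ≤ 2 * k * (C₁ * ‖y - x‖) ^ (k⁻¹ : ℝ) :=
        (convex_segment x y).isPreconnected.norm_sub_le_of_norm_pow_sub_pow_le (hcont.mono hseg)
          hre' hk (by positivity) (left_mem_segment ℝ x y) (right_mem_segment ℝ x y) hpow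
    _ = 2 * k * C₁ ^ ((1 : ℝ) / k) * ‖y - x‖ ^ ((1 : ℝ) / k) := by
        rw [Real.mul_rpow hC₁ (norm_nonneg _), one_div]; ring

theorem stmt8 {n : ℕ} (R : ℝ) (hR : 0 < R) (k : ℕ) (hk : 1 ≤ k)
    (g : EuclideanSpace ℝ (Fin n) → ℂ) (C₁ : ℝ)
    (hcont : ContinuousOn g (ball 0 R))
    (hre : ∀ x ∈ ball (0 : EuclideanSpace ℝ (Fin n)) R, 0 ≤ (g x).re)
    (heq : ∀ x ∈ ball (0 : EuclideanSpace ℝ (Fin n)) R, (g x).re = 0 → x = 0)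
    (hg0 : g 0 = 0)
    (hlip : ∀ x ∈ ball (0 : EuclideanSpace ℝ (Fin n)) R,
      ∀ y ∈ ball (0 : EuclideanSpace ℝ (Fin n)) R,
        ‖(g y) ^ k - (g x) ^ k‖ ≤ C₁ * ‖y - x‖) :
    ∀ x ∈ ball (0 : EuclideanSpace ℝ (Fin n)) R,
      ∀ y ∈ ball (0 : EuclideanSpace ℝ (Fin n)) R,
        ‖g y - g x‖ ≤
          (2 * k) * C₁ ^ ((1:ℝ) / k) * ‖y - x‖ ^ ((1:ℝ) / k) :=
  stmt8_general R k hk g C₁ hcont hre heq hg0 hlip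
end

section
/- Let f₁(x,y,z) = 8x² + 8y² − z² and f₂(x,y,z) = z(x² + y²) − x³ be polynomials on ℝ³. Then the common zero locus V(f₁, f₂) = {(x,y,z) ∈ ℝ³ : f₁ = 0 and f₂ = 0} equals {(0,0,0)}. -/
theorem stmt11 :
    {p : ℝ × ℝ × ℝ |
        8 * p.1 ^ 2 + 8 * p.2.1 ^ 2 - p.2.2 ^ 2 = 0 ∧
        p.2.2 * (p.1 ^ 2 + p.2.1 ^ 2) - p.1 ^ 3 = 0} =
      {(0, 0, 0)} := by
  ext ⟨x, y, z⟩
  simp only [Set.mem_setOf_eq, Set.mem_singleton_iff, Prod.mk.injEq]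
  constructor
  · rintro ⟨h1, h2⟩
    have e : z * (x ^ 2 + y ^ 2) = x ^ 3 := by linarith
    have hz2 : z ^ 2 = 8 * (x ^ 2 + y ^ 2) := by linarith
    have hsq : 8 * (x ^ 2 + y ^ 2) ^ 3 = x ^ 6 := by
      calc 8 * (x ^ 2 + y ^ 2) ^ 3 = z ^ 2 * (x ^ 2 + y ^ 2) ^ 2 := by rw [hz2]; ring
        _ = (z * (x ^ 2 + y ^ 2)) ^ 2 := by ring
        _ = x ^ 6 := by rw [e]; ring
    have hx6 : x ^ 6 ≤ (x ^ 2 + y ^ 2) ^ 3 := by nlinarith [sq_nonneg x, sq_nonneg y, sq_nonneg (x*y), sq_nonneg (x^2+y^2), sq_nonneg (x^2*y), sq_nonneg (x*y^2), sq_nonneg (y^3), sq_nonneg (x^2*y^2)]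
    have hcube : (x ^ 2 + y ^ 2) ^ 3 = 0 := by
      have h0 : (0:ℝ) ≤ (x ^ 2 + y ^ 2) ^ 3 := by positivity
      linarith
    have hr : x ^ 2 + y ^ 2 = 0 := by
      have := pow_eq_zero_iff (n := 3) (by norm_num) |>.mp hcube
      exact this
    have hx : x = 0 := by nlinarith [sq_nonneg x, sq_nonneg y]
    have hy : y = 0 := by nlinarith [sq_nonneg x, sq_nonneg y]
    have hz : z = 0 := by nlinarith [sq_nonneg z]
    exact ⟨hx, hy, hz⟩
  · rintro ⟨hx, hy, hz⟩
    subst hx; subst hy; subst hz; norm_num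
end

section
/- Define F₁(x,y,z,t) = 8x² + 8y² − z² + t² and F₂(x,y,z,t) = z(x² + y²) + z t² − x³ on ℝ³ × ℝ. Then F₁(x,y,z,0) = 8x² + 8y² − z², F₂(x,y,z,0) = z(x²+y²) − x³, and for every t ≠ 0 the system F₁(x,y,z,t) = 0, F₂(x,y,z,t) = 0 has no real solutions (x,y,z) ∈ ℝ³. -/
theorem stmt12 (F₁ F₂ : ℝ → ℝ → ℝ → ℝ → ℝ)
    (hF₁ : ∀ x y z t, F₁ x y z t = 8 * x ^ 2 + 8 * y ^ 2 - z ^ 2 + t ^ 2)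
    (hF₂ : ∀ x y z t, F₂ x y z t = z * (x ^ 2 + y ^ 2) + z * t ^ 2 - x ^ 3) :
    (∀ x y z, F₁ x y z 0 = 8 * x ^ 2 + 8 * y ^ 2 - z ^ 2) ∧
    (∀ x y z, F₂ x y z 0 = z * (x ^ 2 + y ^ 2) - x ^ 3) ∧
    ∀ t : ℝ, t ≠ 0 → ¬∃ x y z : ℝ, F₁ x y z t = 0 ∧ F₂ x y z t = 0 := by
  refine ⟨fun x y z => by rw [hF₁]; ring, fun x y z => by rw [hF₂]; ring, ?_⟩
  rintro t ht ⟨x, y, z, h1, h2⟩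
  rw [hF₁] at h1
  rw [hF₂] at h2
  have ht2 : 0 < t ^ 2 := by positivity
  set s := x ^ 2 + y ^ 2 + t ^ 2 with hsdef
  have hs : 0 < s := by positivity
  have hz : z * s = x ^ 3 := by rw [hsdef]; linarith [h2]; 
  have h6 : z ^ 2 * s ^ 2 = (x ^ 2) ^ 3 := by
    calc z ^ 2 * s ^ 2 = (z * s) ^ 2 := by ring
    _ = (x ^ 3) ^ 2 := by rw [hz]
    _ = (x ^ 2) ^ 3 := by ring
  have hx2s : x ^ 2 ≤ s := by nlinarith [sq_nonneg y]
  have hss : x ^ 2 * x ^ 2 ≤ s * s := mul_le_mul hx2s hx2s (sq_nonneg x) hs.le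
  have hx6 : (x ^ 2) ^ 3 ≤ x ^ 2 * s ^ 2 := by
    have := mul_le_mul_of_nonneg_left hss (sq_nonneg x)
    nlinarith [this]
  have hz2 : z ^ 2 ≤ x ^ 2 := by
    have h := h6.trans_le hx6
    exact le_of_mul_le_mul_right h (pow_pos hs 2)
  nlinarith [sq_nonneg y]
end

section
/- Let f₁(x,y,z) = 8x² + 8y² − z² and f₂(x,y,z) = z(x²+y²) − x³. For all constants C₁, C₂ ∈ ℝ, the set V(f₁ + C₁, f₂ + C₂) = {(x,y,z) ∈ ℝ³ : 8x² + 8y² − z² + C₁ = 0 and z(x²+y²) − x³ + C₂ = 0} is nonempty. -/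
/-!
On the plane `x = 0` the system reads `8y² = z² - C₁`, `z y² = -C₂`, so it suffices to find `z`
with `z² ≥ C₁` and `z (z² - C₁) = -8 C₂`. The odd function `z ↦ z (z² - C₁)` vanishes at
`s = √(max C₁ 0)` and tends to `∞`, so by the intermediate value theorem it takes every value `≥ 0`
on `[s, ∞)`, where `z² ≥ C₁` holds automatically; negative values are reached at `-z`.
-/

open Filter Set

lemma exists_sq_ge_and_mul_sq_sub_eq_of_nonneg (a : ℝ) {c : ℝ} (hc : 0 ≤ c) :
    ∃ z : ℝ, a ≤ z ^ 2 ∧ z * (z ^ 2 - a) = c := by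
  set s := √(max a 0)
  have hs_sq : s ^ 2 = max a 0 := Real.sq_sqrt (le_max_right a 0)
  have hs_root : s * (s ^ 2 - a) = 0 := by
    rcases le_total a 0 with ha | ha
    · simp [s, max_eq_right ha]
    · simp [hs_sq, max_eq_left ha]
  have hcont : ContinuousOn (fun z : ℝ => z * (z ^ 2 - a)) (Ici s) := by fun_prop
  have hlim : Tendsto (fun z : ℝ => z * (z ^ 2 - a)) atTop atTop :=
    tendsto_id.atTop_mul_atTop₀
      (tendsto_atTop_add_const_right _ _ (tendsto_pow_atTop two_ne_zero))
  obtain ⟨z, hsz, hz⟩ := isPreconnected_Ici.intermediate_value_Ici (l := atTop) self_mem_Ici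
    (tendsto_principal.mpr (eventually_ge_atTop s)) hcont hlim (show s * (s ^ 2 - a) ≤ c by
      rw [hs_root]; exact hc)
  refine ⟨z, ?_, hz⟩
  calc a ≤ s ^ 2 := hs_sq ▸ le_max_left a 0
    _ ≤ z ^ 2 := pow_le_pow_left₀ (Real.sqrt_nonneg _) hsz 2

lemma exists_sq_ge_and_mul_sq_sub_eq (a c : ℝ) :
    ∃ z : ℝ, a ≤ z ^ 2 ∧ z * (z ^ 2 - a) = c := by
  rcases le_total 0 c with hc | hc
  · exact exists_sq_ge_and_mul_sq_sub_eq_of_nonneg a hc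
  · obtain ⟨z, hza, hz⟩ := exists_sq_ge_and_mul_sq_sub_eq_of_nonneg a (neg_nonneg.mpr hc)
    exact ⟨-z, by rwa [neg_sq], by linear_combination -hz⟩

theorem stmt13 (C₁ C₂ : ℝ) :
    ∃ x y z : ℝ,
      8 * x ^ 2 + 8 * y ^ 2 - z ^ 2 + C₁ = 0 ∧
      z * (x ^ 2 + y ^ 2) - x ^ 3 + C₂ = 0 := by
  obtain ⟨z, hzC, hz⟩ := exists_sq_ge_and_mul_sq_sub_eq C₁ (-8 * C₂)
  have hy : √((z ^ 2 - C₁) / 8) ^ 2 = (z ^ 2 - C₁) / 8 := Real.sq_sqrt (by linarith)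
  refine ⟨0, √((z ^ 2 - C₁) / 8), z, ?_, ?_⟩
  · rw [hy]; ring
  · rw [hy]; linear_combination hz / 8
end

section
/- Let f : Ω → ℝᵠ be continuous on an open Ω ⊆ ℝⁿ with a locally inessential isolated zero at p (only zero in B(p,R) ⊆ Ω). Then for any ρ ∈ (0,R), there exist a continuous map j : Ω → ℝᵠ and a continuous homotopy F : Ω × [0,1] → ℝᵠ with F(·,0) = f and F(·,1) = j such that: F(x,t) = f(x) for all x ∈ Ω \ B(p,ρ) and all t ∈ [0,1]; and for all t > 0, F(x,t) ≠ 0 for every x ∈ B(p,R). -/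
/-!
Write `x = p + r • (v - p)` with `v ∈ sphere p ρ` and `r = ‖x - p‖ / ρ ∈ [0, 1]`. For each `v`,
following `f` along the segment from `p` to `v` and then the null-homotopy `G` at `v` gives a path
`σ ↦ rayPath f G p (v, σ)`, `σ ∈ [0, 2]`, from `0` to the constant `c ≠ 0`, which vanishes only
at `σ = 0`. At time `t > 0` the homotopy is `β • rayPath f G p (v, α)`: nothing changes where
`r ≥ t`; on `t / 2 ≤ r ≤ t` the factor `β` drops from `1` to `t`; on `t / 3 ≤ r ≤ t / 2` the
parameter `α` is pushed from `r` to `2`; so near `p` the value is the constant `t • c`. Since `β`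
reaches `t` before `α` leaves `r`, the values near `(p, 0)` are small, which gives continuity
there.
-/

open Metric Set

open Filter Topology

theorem ContinuousOn.if_le_const {α β : Type*} [TopologicalSpace α] [TopologicalSpace β]
    {f h : α → β} {g : α → ℝ} {a : ℝ} {s : Set α} (hg : Continuous g)
    (hf : ContinuousOn f (s ∩ {x | g x ≤ a})) (hh : ContinuousOn h (s ∩ {x | a ≤ g x}))
    (hfh : ∀ x ∈ s, g x = a → f x = h x) :
    ContinuousOn (fun x => if g x ≤ a then f x else h x) s := by
  refine ContinuousOn.if (fun x hx => hfh x hx.1 (frontier_le_subset_eq hg continuous_const hx.2))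
    ?_ (hh.mono ?_)
  · rwa [closure_le_eq hg continuous_const]
  · simp only [not_le]
    exact inter_subset_inter_right s (closure_lt_subset_le continuous_const hg)

noncomputable def ramp (a : ℝ) : ℝ := max 0 (min a 1)

theorem ramp_nonneg (a : ℝ) : 0 ≤ ramp a := le_max_left _ _

theorem ramp_le_one (a : ℝ) : ramp a ≤ 1 := max_le zero_le_one (min_le_right _ _)

theorem ramp_of_nonpos {a : ℝ} (ha : a ≤ 0) : ramp a = 0 :=
  max_eq_left (min_le_of_left_le ha)

theorem ramp_of_one_le {a : ℝ} (ha : 1 ≤ a) : ramp a = 1 := by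
  rw [ramp, min_eq_right ha, max_eq_right zero_le_one]

@[fun_prop]
theorem continuous_ramp : Continuous ramp := by
  unfold ramp; fun_prop

theorem norm_sub_div_le_one_of_mem_closedBall {E : Type*} [SeminormedAddCommGroup E] {p x : E}
    {ρ : ℝ} (hρ : 0 < ρ) (hx : x ∈ closedBall p ρ) : ‖x - p‖ / ρ ≤ 1 := by
  rw [div_le_one hρ, ← dist_eq_norm]
  exact hx

section Radial

variable {E : Type*} [NormedAddCommGroup E] [NormedSpace ℝ E] {p x : E} {ρ : ℝ}

noncomputable def radialProj (p : E) (ρ : ℝ) (x : E) : E := p + (ρ / ‖x - p‖) • (x - p)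

theorem dist_add_smul_sub_of_mem_sphere {v : E} (hv : v ∈ sphere p ρ) {σ : ℝ} (hσ : 0 ≤ σ) :
    dist (p + σ • (v - p)) p = σ * ρ := by
  rw [dist_eq_norm, add_sub_cancel_left, norm_smul, Real.norm_of_nonneg hσ, ← dist_eq_norm,
    mem_sphere.1 hv]

theorem radialProj_mem_sphere (hρ : 0 ≤ ρ) (hx : x ≠ p) : radialProj p ρ x ∈ sphere p ρ := by
  have : ‖x - p‖ ≠ 0 := norm_ne_zero_iff.2 (sub_ne_zero.2 hx)
  rw [mem_sphere, radialProj, dist_eq_norm, add_sub_cancel_left, norm_smul,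
    Real.norm_of_nonneg (by positivity), div_mul_cancel₀ _ this]

theorem add_smul_radialProj_sub (hρ : ρ ≠ 0) (hx : x ≠ p) :
    p + (‖x - p‖ / ρ) • (radialProj p ρ x - p) = x := by
  have : ‖x - p‖ ≠ 0 := norm_ne_zero_iff.2 (sub_ne_zero.2 hx)
  rw [radialProj, add_sub_cancel_left, smul_smul, div_mul_div_cancel₀ hρ, div_self this,
    one_smul, add_sub_cancel]

theorem continuousOn_radialProj : ContinuousOn (radialProj p ρ) {x | x ≠ p} := by
  unfold radialProj
  refine continuousOn_const.add (ContinuousOn.smul ?_ (by fun_prop))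
  exact continuousOn_const.div (by fun_prop) fun x hx => norm_ne_zero_iff.2 (sub_ne_zero.2 hx)

end Radial

section RayPath

variable {E V : Type*} [NormedAddCommGroup E] [NormedSpace ℝ E]
  {f : E → V} {G : E × ℝ → V} {p v x : E} {ρ σ : ℝ} {c : V}

noncomputable def rayPath (f : E → V) (G : E × ℝ → V) (p : E) (z : E × ℝ) : V :=
  if z.2 ≤ 1 then f (p + z.2 • (z.1 - p)) else G (z.1, z.2 - 1)

theorem rayPath_of_le_one (hσ : σ ≤ 1) : rayPath f G p (v, σ) = f (p + σ • (v - p)) :=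
  if_pos hσ

theorem rayPath_two (hG₁ : ∀ v ∈ sphere p ρ, G (v, 1) = c) (hv : v ∈ sphere p ρ) :
    rayPath f G p (v, 2) = c := by
  rw [rayPath, if_neg (by norm_num)]
  norm_num [hG₁ v hv]

theorem continuousOn_rayPath [TopologicalSpace V] (hρ : 0 ≤ ρ)
    (hf : ContinuousOn f (closedBall p ρ))
    (hG : ContinuousOn G (sphere p ρ ×ˢ Icc 0 1)) (hG₀ : ∀ v ∈ sphere p ρ, G (v, 0) = f v) :
    ContinuousOn (rayPath f G p) (sphere p ρ ×ˢ Icc 0 2) := by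
  refine ContinuousOn.if_le_const continuous_snd (hf.comp (by fun_prop) ?_)
    (hG.comp (by fun_prop) ?_) ?_
  · rintro ⟨v, σ⟩ ⟨⟨hv, hσ, -⟩, hσ₁ : σ ≤ 1⟩
    rw [mem_closedBall, dist_add_smul_sub_of_mem_sphere hv hσ]
    nlinarith
  · rintro ⟨v, σ⟩ ⟨⟨hv, -, hσ₂⟩, hσ₁ : 1 ≤ σ⟩
    exact ⟨hv, by linarith, by linarith⟩
  · rintro ⟨v, σ⟩ ⟨hv, -⟩ (rfl : σ = 1)
    simp [hG₀ v hv]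

theorem rayPath_ne_zero [Zero V] (hρ : 0 < ρ) (hf : ∀ x ∈ closedBall p ρ, f x = 0 → x = p)
    (hG : ∀ v ∈ sphere p ρ, ∀ τ ∈ Icc (0 : ℝ) 1, G (v, τ) ≠ 0) (hv : v ∈ sphere p ρ)
    (hσ : σ ∈ Ioc 0 2) : rayPath f G p (v, σ) ≠ 0 := by
  unfold rayPath
  split_ifs with hσ₁
  · have hdist := dist_add_smul_sub_of_mem_sphere hv hσ.1.le
    refine fun h => ?_
    have := hf _ (by rw [mem_closedBall, hdist]; nlinarith) h
    rw [this, dist_self] at hdist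
    nlinarith [hσ.1]
  · exact hG v hv _ ⟨by linarith, by linarith [hσ.2]⟩

theorem rayPath_radialProj (hρ : 0 < ρ) (hx : x ∈ closedBall p ρ) (hxp : x ≠ p) :
    rayPath f G p (radialProj p ρ x, ‖x - p‖ / ρ) = f x := by
  rw [rayPath_of_le_one (norm_sub_div_le_one_of_mem_closedBall hρ hx),
    add_smul_radialProj_sub hρ.ne' hxp]

end RayPath

section Schedule

variable {r t : ℝ}

noncomputable def dampingFactor (r t : ℝ) : ℝ := 1 - (1 - t) * ramp (t / r - 1)

noncomputable def rayParam (r t : ℝ) : ℝ := r + (2 - r) * ramp (t / r - 2)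

theorem dampingFactor_zero_right (r : ℝ) : dampingFactor r 0 = 1 := by
  rw [dampingFactor, ramp_of_nonpos (by norm_num)]; ring

theorem rayParam_zero_right (r : ℝ) : rayParam r 0 = r := by
  rw [rayParam, ramp_of_nonpos (by norm_num)]; ring

theorem dampingFactor_one_left (ht : t ≤ 1) : dampingFactor 1 t = 1 := by
  rw [dampingFactor, ramp_of_nonpos (by linarith [div_one t])]; ring

theorem rayParam_one_left (ht : t ≤ 1) : rayParam 1 t = 1 := by
  rw [rayParam, ramp_of_nonpos (by linarith [div_one t])]; ring

theorem le_dampingFactor (ht : t ≤ 1) : t ≤ dampingFactor r t := by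
  have := ramp_le_one (t / r - 1)
  unfold dampingFactor; nlinarith

theorem dampingFactor_le_one (ht : t ≤ 1) : dampingFactor r t ≤ 1 := by
  have := ramp_nonneg (t / r - 1)
  unfold dampingFactor; nlinarith

theorem le_rayParam (hr : r ≤ 2) : r ≤ rayParam r t := by
  have := ramp_nonneg (t / r - 2)
  unfold rayParam; nlinarith

theorem rayParam_le_two (hr : r ≤ 2) : rayParam r t ≤ 2 := by
  have := ramp_le_one (t / r - 2)
  unfold rayParam; nlinarith

theorem dampingFactor_eq_and_rayParam_eq_two (hr : 0 < r) (h : 3 * r ≤ t) :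
    dampingFactor r t = t ∧ rayParam r t = 2 := by
  have h3 : 3 ≤ t / r := by rw [le_div_iff₀ hr]; linarith
  simp only [dampingFactor, rayParam, ramp_of_one_le (show 1 ≤ t / r - 1 by linarith),
    ramp_of_one_le (show 1 ≤ t / r - 2 by linarith)]
  constructor <;> ring

theorem rayParam_eq_or_dampingFactor_eq : rayParam r t = r ∨ dampingFactor r t = t := by
  rcases le_or_gt (t / r - 2) 0 with h | h
  · left; simp [rayParam, ramp_of_nonpos h]
  · right; simp only [dampingFactor, ramp_of_one_le (show 1 ≤ t / r - 1 by linarith)]; ring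

end Schedule

section CoreHomotopy

variable {E V : Type*} [NormedAddCommGroup E] [NormedSpace ℝ E]
  [NormedAddCommGroup V] [NormedSpace ℝ V]
  {f : E → V} {G : E × ℝ → V} {p x : E} {ρ t : ℝ} {c : V}

open Classical in
noncomputable def coreHomotopy (f : E → V) (G : E × ℝ → V) (p : E) (ρ : ℝ) (c : V)
    (z : E × ℝ) : V :=
  if z.1 = p then z.2 • c
  else dampingFactor (‖z.1 - p‖ / ρ) z.2 •
    rayPath f G p (radialProj p ρ z.1, rayParam (‖z.1 - p‖ / ρ) z.2)

theorem coreHomotopy_of_ne (hx : x ≠ p) :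
    coreHomotopy f G p ρ c (x, t) = dampingFactor (‖x - p‖ / ρ) t •
      rayPath f G p (radialProj p ρ x, rayParam (‖x - p‖ / ρ) t) :=
  if_neg hx

theorem coreHomotopy_zero_right (hρ : 0 < ρ) (hp : f p = 0) (hx : x ∈ closedBall p ρ) :
    coreHomotopy f G p ρ c (x, 0) = f x := by
  rcases eq_or_ne x p with rfl | hxp
  · simp [coreHomotopy, hp]
  · rw [coreHomotopy_of_ne hxp, dampingFactor_zero_right, rayParam_zero_right, one_smul,
      rayPath_radialProj hρ hx hxp]

theorem coreHomotopy_of_mem_sphere (hρ : 0 < ρ) (hx : x ∈ sphere p ρ) (ht : t ≤ 1) :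
    coreHomotopy f G p ρ c (x, t) = f x := by
  have hxp : x ≠ p := ne_of_mem_sphere hx hρ.ne'
  have hr : ‖x - p‖ / ρ = 1 := by rw [← dist_eq_norm, mem_sphere.1 hx, div_self hρ.ne']
  rw [coreHomotopy_of_ne hxp,
    ← rayPath_radialProj (f := f) (G := G) hρ (sphere_subset_closedBall hx) hxp, hr,
    dampingFactor_one_left ht, rayParam_one_left ht, one_smul]

theorem coreHomotopy_ne_zero (hρ : 0 < ρ) (hf : ∀ x ∈ closedBall p ρ, f x = 0 → x = p)
    (hG : ∀ v ∈ sphere p ρ, ∀ τ ∈ Icc (0 : ℝ) 1, G (v, τ) ≠ 0) (hc : c ≠ 0)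
    (hx : x ∈ closedBall p ρ) (ht : t ∈ Ioc 0 1) : coreHomotopy f G p ρ c (x, t) ≠ 0 := by
  rcases eq_or_ne x p with rfl | hxp
  · simpa [coreHomotopy] using ⟨ht.1.ne', hc⟩
  have hr₀ : 0 < ‖x - p‖ / ρ := div_pos (norm_sub_pos_iff.2 hxp) hρ
  have hr₂ : ‖x - p‖ / ρ ≤ 2 := by linarith [norm_sub_div_le_one_of_mem_closedBall hρ hx]
  rw [coreHomotopy_of_ne hxp]
  refine smul_ne_zero (ht.1.trans_le (le_dampingFactor ht.2)).ne' ?_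
  exact rayPath_ne_zero hρ hf hG (radialProj_mem_sphere hρ.le hxp)
    ⟨hr₀.trans_le (le_rayParam hr₂), rayParam_le_two hr₂⟩

theorem norm_coreHomotopy_le {M : ℝ} (hρ : 0 < ρ)
    (hM : ∀ w ∈ sphere p ρ ×ˢ Icc (0 : ℝ) 2, ‖rayPath f G p w‖ ≤ M) (hc : ‖c‖ ≤ M)
    (hx : x ∈ closedBall p ρ) (ht : t ∈ Icc (0 : ℝ) 1) :
    ‖coreHomotopy f G p ρ c (x, t)‖ ≤ ‖f x‖ + t * M := by
  have hM₀ : 0 ≤ M := (norm_nonneg c).trans hc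
  rcases eq_or_ne x p with rfl | hxp
  · simp only [coreHomotopy, if_true, norm_smul, Real.norm_of_nonneg ht.1]
    nlinarith [norm_nonneg (f x), ht.1]
  set r := ‖x - p‖ / ρ
  have hr₂ : r ≤ 2 := by linarith [norm_sub_div_le_one_of_mem_closedBall hρ hx]
  have hβ₀ : 0 ≤ dampingFactor r t := ht.1.trans (le_dampingFactor ht.2)
  rw [coreHomotopy_of_ne hxp, norm_smul, Real.norm_of_nonneg hβ₀]
  rcases rayParam_eq_or_dampingFactor_eq (r := r) (t := t) with hα | hβ
  · rw [hα, rayPath_radialProj hρ hx hxp]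
    nlinarith [dampingFactor_le_one (r := r) ht.2, norm_nonneg (f x), ht.1]
  · rw [hβ]
    have := hM (radialProj p ρ x, rayParam r t) ⟨radialProj_mem_sphere hρ.le hxp,
      (div_nonneg (norm_nonneg _) hρ.le).trans (le_rayParam hr₂), rayParam_le_two hr₂⟩
    nlinarith [norm_nonneg (f x), ht.1]

theorem continuousOn_coreHomotopy_of_ne (hρ : 0 < ρ) (hf : ContinuousOn f (closedBall p ρ))
    (hG : ContinuousOn G (sphere p ρ ×ˢ Icc 0 1)) (hG₀ : ∀ v ∈ sphere p ρ, G (v, 0) = f v) :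
    ContinuousOn (coreHomotopy f G p ρ c) (closedBall p ρ ×ˢ Icc 0 1 ∩ {z | z.1 ≠ p}) := by
  have hdiv : ContinuousOn (fun z : E × ℝ => z.2 / (‖z.1 - p‖ / ρ)) {z | z.1 ≠ p} :=
    continuousOn_snd.div (by fun_prop) fun z hz => (div_pos (norm_sub_pos_iff.2 hz) hρ).ne'
  have hβ : ContinuousOn (fun z : E × ℝ => dampingFactor (‖z.1 - p‖ / ρ) z.2) {z | z.1 ≠ p} := by
    unfold dampingFactor; fun_prop
  have hα : ContinuousOn (fun z : E × ℝ => rayParam (‖z.1 - p‖ / ρ) z.2) {z | z.1 ≠ p} := by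
    unfold rayParam; fun_prop
  have hπ : ContinuousOn (fun z : E × ℝ => radialProj p ρ z.1) {z | z.1 ≠ p} :=
    continuousOn_radialProj.comp continuousOn_fst fun z hz => hz
  have hray := (continuousOn_rayPath hρ.le hf hG hG₀).comp
    ((hπ.prodMk hα).mono (inter_subset_right (s := closedBall p ρ ×ˢ Icc 0 1))) <| by
      rintro z ⟨⟨hx, -⟩, hxp⟩
      have hr₂ : ‖z.1 - p‖ / ρ ≤ 2 := by linarith [norm_sub_div_le_one_of_mem_closedBall hρ hx]
      exact ⟨radialProj_mem_sphere hρ.le hxp,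
        (div_nonneg (norm_nonneg _) hρ.le).trans (le_rayParam hr₂), rayParam_le_two hr₂⟩
  refine ((hβ.mono inter_subset_right).smul hray).congr ?_
  rintro ⟨x, t⟩ ⟨-, hxp⟩
  exact coreHomotopy_of_ne hxp

theorem continuousAt_coreHomotopy_center_of_pos (hρ : 0 < ρ)
    (hG₁ : ∀ v ∈ sphere p ρ, G (v, 1) = c) (ht : 0 < t) :
    ContinuousAt (coreHomotopy f G p ρ c) (p, t) := by
  have hnear : ∀ᶠ z : E × ℝ in 𝓝 (p, t), 3 * (‖z.1 - p‖ / ρ) < z.2 :=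
    ContinuousAt.eventually_lt (by fun_prop) continuousAt_snd (by simpa using ht)
  refine ContinuousAt.congr (f := fun z : E × ℝ => z.2 • c) (by fun_prop) ?_
  filter_upwards [hnear] with ⟨x, s⟩ hs
  rcases eq_or_ne x p with rfl | hxp
  · simp [coreHomotopy]
  · obtain ⟨hβ, hα⟩ := dampingFactor_eq_and_rayParam_eq_two
      (div_pos (norm_sub_pos_iff.2 hxp) hρ) hs.le
    rw [coreHomotopy_of_ne hxp, hβ, hα, rayPath_two hG₁ (radialProj_mem_sphere hρ.le hxp)]

theorem continuousWithinAt_coreHomotopy_center_zero [ProperSpace E] (hρ : 0 < ρ)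
    (hf : ContinuousOn f (closedBall p ρ)) (hp : f p = 0)
    (hG : ContinuousOn G (sphere p ρ ×ˢ Icc 0 1)) (hG₀ : ∀ v ∈ sphere p ρ, G (v, 0) = f v) :
    ContinuousWithinAt (coreHomotopy f G p ρ c) (closedBall p ρ ×ˢ Icc 0 1) (p, 0) := by
  obtain ⟨M, hM⟩ := ((isCompact_sphere p ρ).prod isCompact_Icc).exists_bound_of_continuousOn
    (continuousOn_rayPath hρ.le hf hG hG₀)
  have hfp : Tendsto (fun z : E × ℝ => f z.1) (𝓝[closedBall p ρ ×ˢ Icc 0 1] (p, 0)) (𝓝 0) := by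
    rw [← hp]
    exact (hf p (mem_closedBall_self hρ.le)).comp continuousWithinAt_fst fun z hz => hz.1
  have hbound : Tendsto (fun z : E × ℝ => ‖f z.1‖ + z.2 * max M ‖c‖)
      (𝓝[closedBall p ρ ×ˢ Icc 0 1] (p, 0)) (𝓝 0) := by
    simpa using hfp.norm.add ((continuousWithinAt_snd (s := closedBall p ρ ×ˢ Icc 0 1)
      (p := (p, (0 : ℝ)))).mul_const (max M ‖c‖))
  rw [ContinuousWithinAt, show coreHomotopy f G p ρ c (p, 0) = 0 by simp [coreHomotopy]]
  refine squeeze_zero_norm' ?_ hbound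
  filter_upwards [self_mem_nhdsWithin] with ⟨x, t⟩ ⟨hx, ht⟩
  exact norm_coreHomotopy_le hρ (fun w hw => (hM w hw).trans (le_max_left _ _))
    (le_max_right _ _) hx ht

theorem continuousOn_coreHomotopy [ProperSpace E] (hρ : 0 < ρ)
    (hf : ContinuousOn f (closedBall p ρ)) (hp : f p = 0)
    (hG : ContinuousOn G (sphere p ρ ×ˢ Icc 0 1)) (hG₀ : ∀ v ∈ sphere p ρ, G (v, 0) = f v)
    (hG₁ : ∀ v ∈ sphere p ρ, G (v, 1) = c) :
    ContinuousOn (coreHomotopy f G p ρ c) (closedBall p ρ ×ˢ Icc 0 1) := by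
  rintro ⟨x, t⟩ hz
  rcases eq_or_ne x p with rfl | hxp
  · rcases hz.2.1.eq_or_lt with rfl | ht
    · exact continuousWithinAt_coreHomotopy_center_zero hρ hf hp hG hG₀
    · exact (continuousAt_coreHomotopy_center_of_pos hρ hG₁ ht).continuousWithinAt
  · exact (continuousOn_coreHomotopy_of_ne hρ hf hG hG₀ _ ⟨hz, hxp⟩).mono_of_mem_nhdsWithin
      (inter_mem_nhdsWithin _ ((isOpen_ne.preimage continuous_fst).mem_nhds hxp))

end CoreHomotopy

section ZeroRemoval

variable {E V : Type*} [NormedAddCommGroup E] [NormedSpace ℝ E]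
  [NormedAddCommGroup V] [NormedSpace ℝ V]
  {f : E → V} {G : E × ℝ → V} {p x : E} {ρ t : ℝ} {c : V}

noncomputable def zeroRemovalHomotopy (f : E → V) (G : E × ℝ → V) (p : E) (ρ : ℝ) (c : V)
    (z : E × ℝ) : V :=
  if ‖z.1 - p‖ ≤ ρ then coreHomotopy f G p ρ c z else f z.1

theorem continuousOn_zeroRemovalHomotopy [ProperSpace E] {Ω : Set E} (hρ : 0 < ρ)
    (hρΩ : closedBall p ρ ⊆ Ω) (hf : ContinuousOn f Ω) (hp : f p = 0)
    (hG : ContinuousOn G (sphere p ρ ×ˢ Icc 0 1)) (hG₀ : ∀ v ∈ sphere p ρ, G (v, 0) = f v)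
    (hG₁ : ∀ v ∈ sphere p ρ, G (v, 1) = c) :
    ContinuousOn (zeroRemovalHomotopy f G p ρ c) (Ω ×ˢ Icc 0 1) := by
  refine ContinuousOn.if_le_const (by fun_prop : Continuous fun z : E × ℝ => ‖z.1 - p‖)
    ((continuousOn_coreHomotopy hρ (hf.mono hρΩ) hp hG hG₀ hG₁).mono ?_)
    (hf.comp continuousOn_fst fun z hz => hz.1.1) ?_
  · rintro ⟨x, t⟩ ⟨⟨-, ht⟩, hx⟩
    exact ⟨mem_closedBall_iff_norm.2 hx, ht⟩
  · rintro ⟨x, t⟩ ⟨-, ht⟩ hx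
    exact coreHomotopy_of_mem_sphere hρ (mem_sphere_iff_norm.2 hx) ht.2

theorem zeroRemovalHomotopy_zero_right (hρ : 0 < ρ) (hp : f p = 0) (x : E) :
    zeroRemovalHomotopy f G p ρ c (x, 0) = f x := by
  unfold zeroRemovalHomotopy
  split_ifs with hx
  · exact coreHomotopy_zero_right hρ hp (mem_closedBall_iff_norm.2 hx)
  · rfl

theorem zeroRemovalHomotopy_of_notMem_ball (hρ : 0 < ρ) (hx : x ∉ ball p ρ) (ht : t ≤ 1) :
    zeroRemovalHomotopy f G p ρ c (x, t) = f x := by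
  rw [mem_ball_iff_norm, not_lt] at hx
  unfold zeroRemovalHomotopy
  split_ifs with hxρ
  · exact coreHomotopy_of_mem_sphere hρ (mem_sphere_iff_norm.2 (hxρ.antisymm hx)) ht
  · rfl

theorem zeroRemovalHomotopy_ne_zero {s : Set E} (hρ : 0 < ρ) (hρs : closedBall p ρ ⊆ s)
    (hf : ∀ x ∈ s, f x = 0 → x = p) (hG : ∀ v ∈ sphere p ρ, ∀ τ ∈ Icc (0 : ℝ) 1, G (v, τ) ≠ 0)
    (hc : c ≠ 0) (hx : x ∈ s) (ht : t ∈ Ioc 0 1) : zeroRemovalHomotopy f G p ρ c (x, t) ≠ 0 := by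
  unfold zeroRemovalHomotopy
  split_ifs with hxρ
  · exact coreHomotopy_ne_zero hρ (fun y hy => hf y (hρs hy)) hG hc
      (mem_closedBall_iff_norm.2 hxρ) ht
  · refine fun h => hxρ ?_
    rw [hf x hx h, sub_self, norm_zero]
    exact hρ.le

end ZeroRemoval

theorem stmt16_general {n q : ℕ} (Ω : Set (EuclideanSpace ℝ (Fin n)))
    (f : EuclideanSpace ℝ (Fin n) → EuclideanSpace ℝ (Fin q))
    (p : EuclideanSpace ℝ (Fin n)) (R : ℝ)
    (hf : ContinuousOn f Ω)
    (hball : ball p R ⊆ Ω) (hp : f p = 0)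
    (hiso : ∀ x ∈ ball p R, f x = 0 → x = p)
    (hinessential : ∀ r ∈ Ioo (0:ℝ) R,
      IsNullHomotopicOn f (sphere p r) {y | y ≠ 0}) :
    ∀ ρ ∈ Ioo (0:ℝ) R,
      ∃ (j : EuclideanSpace ℝ (Fin n) → EuclideanSpace ℝ (Fin q))
        (F : EuclideanSpace ℝ (Fin n) × ℝ → EuclideanSpace ℝ (Fin q)),
        ContinuousOn j Ω ∧
        ContinuousOn F (Ω ×ˢ Icc (0:ℝ) 1) ∧
        (∀ x ∈ Ω, F (x, 0) = f x) ∧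
        (∀ x ∈ Ω, F (x, 1) = j x) ∧
        (∀ x ∈ Ω \ ball p ρ, ∀ t ∈ Icc (0:ℝ) 1, F (x, t) = f x) ∧
        (∀ t ∈ Icc (0:ℝ) 1, 0 < t → ∀ x ∈ ball p R, F (x, t) ≠ 0) := by
  rintro ρ ⟨hρ, hρR⟩
  obtain ⟨G, c, hc, hG, hG₀, hG₁, hGne⟩ := hinessential ρ ⟨hρ, hρR⟩
  have hF := continuousOn_zeroRemovalHomotopy hρ ((closedBall_subset_ball hρR).trans hball)
    hf hp hG hG₀ hG₁
  refine ⟨fun x => zeroRemovalHomotopy f G p ρ c (x, 1), zeroRemovalHomotopy f G p ρ c,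
    hF.comp (by fun_prop) fun x hx => ⟨hx, right_mem_Icc.2 zero_le_one⟩, hF,
    fun x _ => zeroRemovalHomotopy_zero_right hρ hp x, fun x _ => rfl,
    fun x hx t ht => zeroRemovalHomotopy_of_notMem_ball hρ hx.2 ht.2,
    fun t ht ht₀ x hx => ?_⟩
  exact zeroRemovalHomotopy_ne_zero hρ (closedBall_subset_ball hρR) hiso hGne hc hx ⟨ht₀, ht.2⟩

theorem stmt16 {n q : ℕ} (Ω : Set (EuclideanSpace ℝ (Fin n)))
    (f : EuclideanSpace ℝ (Fin n) → EuclideanSpace ℝ (Fin q))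
    (p : EuclideanSpace ℝ (Fin n)) (R : ℝ)
    (hΩ : IsOpen Ω) (hf : ContinuousOn f Ω) (hR : 0 < R)
    (hball : ball p R ⊆ Ω) (hp : f p = 0)
    (hiso : ∀ x ∈ ball p R, f x = 0 → x = p)
    (hinessential : ∀ r ∈ Ioo (0:ℝ) R,
      IsNullHomotopicOn f (sphere p r) {y | y ≠ 0}) :
    ∀ ρ ∈ Ioo (0:ℝ) R,
      ∃ (j : EuclideanSpace ℝ (Fin n) → EuclideanSpace ℝ (Fin q))
        (F : EuclideanSpace ℝ (Fin n) × ℝ → EuclideanSpace ℝ (Fin q)),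
        ContinuousOn j Ω ∧
        ContinuousOn F (Ω ×ˢ Icc (0:ℝ) 1) ∧
        (∀ x ∈ Ω, F (x, 0) = f x) ∧
        (∀ x ∈ Ω, F (x, 1) = j x) ∧
        (∀ x ∈ Ω \ ball p ρ, ∀ t ∈ Icc (0:ℝ) 1, F (x, t) = f x) ∧
        (∀ t ∈ Icc (0:ℝ) 1, 0 < t → ∀ x ∈ ball p R, F (x, t) ≠ 0) :=
  stmt16_general Ω f p R hf hball hp hiso hinessential
end
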